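/- arXiv:1609.02757 — 10 statements merged into one kernel-verified Lean document; each statement's English description precedes it below -/
import Mathlib

section
/- If φ : ℝ⁺ → ℝ is continuous, satisfies ∑_{k∈ℤ} φ(e^{-k}u) = 1 for all u > 0, M₀(φ) := sup_u ∑_k |φ(e^{-k}u)| < ∞, and lim_{r→∞} ∑_{|k - log u| > r} |φ(e^{-k}u)| = 0 uniformly in u, then for any bounded function f : ℝ⁺ → ℝ and any continuity point x > 0 of f, the generalized exponential sampling series (S_w^φ f)(x) = ∑_{k∈ℤ} f(e^{k/w}) φ(e^{-k} x^w) converges to f(x) as w → +∞. -/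
/-!
By the partition of unity, `(S_w^φ f)(x) - f(x) = ∑ₖ (f(e^{k/w}) - f(x)) φ(e^{-k} x^w)`.
Split the indices at `|k - w log x| = r`. For the near indices `|k/w - log x| ≤ r/w`, so for
large `w` continuity of `f ∘ exp` at `log x` makes `|f(e^{k/w}) - f(x)| ≤ η`, and these terms
contribute at most `η M₀(φ)`. The far indices contribute at most `2 sup |f|` times the tail
`∑_{|k - log u| > r} |φ(e^{-k}u)|` at `u = x^w`, which is small uniformly in `u` once `r` is large.
-/

open Real Filter

/-- The generalized exponential sampling operator
`(S_w^φ f)(x) = ∑_{k∈ℤ} f(e^{k/w}) φ(e^{-k} x^w)`. -/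
noncomputable def expSampling (φ f : ℝ → ℝ) (w x : ℝ) : ℝ :=
  ∑' k : ℤ, f (Real.exp (k / w)) * φ (Real.exp (-k) * x ^ w)

section Split

variable {ι : Type*} {b c : ι → ℝ}

theorem summable_abs_mul_of_abs_le {C : ℝ} (hb : Summable fun k => |b k|) (hC : ∀ k, |c k| ≤ C) :
    Summable fun k => |c k * b k| :=
  (hb.mul_left C).of_nonneg_of_le (fun _ => abs_nonneg _) fun k => by
    rw [abs_mul]
    exact mul_le_mul_of_nonneg_right (hC k) (abs_nonneg _)

theorem tsum_abs_mul_le_of_abs_le {C : ℝ} (hb : Summable fun k => |b k|) (hC : ∀ k, |c k| ≤ C) :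
    ∑' k, |c k * b k| ≤ C * ∑' k, |b k| := by
  rw [← tsum_mul_left]
  refine (summable_abs_mul_of_abs_le hb hC).tsum_le_tsum (fun k => ?_) (hb.mul_left C)
  rw [abs_mul]
  exact mul_le_mul_of_nonneg_right (hC k) (abs_nonneg _)

theorem tsum_mul_sub_eq_tsum_sub_mul (a : ℝ) (hb : Summable b)
    (hcb : Summable fun k => c k * b k) (h1 : ∑' k, b k = 1) :
    ∑' k, c k * b k - a = ∑' k, (c k - a) * b k := by
  simp_rw [sub_mul]
  rw [hcb.tsum_sub (hb.mul_left a), tsum_mul_left, h1, mul_one]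

theorem abs_tsum_mul_le_of_abs_le_on_compl (S : Set ι) {C η : ℝ}
    (hb : Summable fun k => |b k|) (hC : ∀ k, |c k| ≤ C) (hη : ∀ k ∉ S, |c k| ≤ η) (hη0 : 0 ≤ η) :
    |∑' k, c k * b k| ≤ C * ∑' k : S, |b k| + η * ∑' k, |b k| := by
  have hcb := summable_abs_mul_of_abs_le hb hC
  have hS : ∑' k : S, |c k * b k| ≤ C * ∑' k : S, |b k| :=
    tsum_abs_mul_le_of_abs_le (hb.subtype S) fun k => hC k
  have hSc : ∑' k : ↥Sᶜ, |c k * b k| ≤ η * ∑' k : ↥Sᶜ, |b k| :=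
    tsum_abs_mul_le_of_abs_le (hb.subtype Sᶜ) fun k => hη k k.2
  have hbSc : ∑' k : ↥Sᶜ, |b k| ≤ ∑' k, |b k| := by
    rw [← hb.tsum_subtype_add_tsum_subtype_compl S]
    exact le_add_of_nonneg_left (tsum_nonneg fun _ => abs_nonneg _)
  have hnorm := norm_tsum_le_tsum_norm (f := fun k => c k * b k) <| by
    simpa only [Real.norm_eq_abs] using hcb
  simp only [Real.norm_eq_abs] at hnorm
  calc |∑' k, c k * b k| ≤ ∑' k, |c k * b k| := hnorm
    _ = ∑' k : S, |c k * b k| + ∑' k : ↥Sᶜ, |c k * b k| :=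
        (hcb.tsum_subtype_add_tsum_subtype_compl S).symm
    _ ≤ C * ∑' k : S, |b k| + η * ∑' k, |b k| :=
        add_le_add hS (hSc.trans (mul_le_mul_of_nonneg_left hbSc hη0))

end Split

theorem abs_div_sub_log_eq {w x : ℝ} (t : ℝ) (hw : 0 < w) (hx : 0 < x) :
    |t / w - log x| = |t - log (x ^ w)| / w := by
  rw [log_rpow hx, ← abs_of_pos hw, ← abs_div, abs_of_pos hw]
  congr 1
  field_simp

theorem eventually_abs_expSampling_sub_le (φ f : ℝ → ℝ) {x M B : ℝ}
    (hsum : ∀ u : ℝ, 0 < u → Summable fun k : ℤ => |φ (exp (-k) * u)|)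
    (hpart : ∀ u : ℝ, 0 < u → ∑' k : ℤ, φ (exp (-k) * u) = 1)
    (hM : ∀ u : ℝ, 0 < u → ∑' k : ℤ, |φ (exp (-k) * u)| ≤ M)
    (htail : ∀ ε > (0:ℝ), ∃ r₀ : ℝ, ∀ r ≥ r₀, ∀ u : ℝ, 0 < u →
      ∑' k : {k : ℤ // r < |(k : ℝ) - log u|}, |φ (exp (-(k:ℤ)) * u)| < ε)
    (hB : ∀ y : ℝ, 0 < y → |f y| ≤ B) (hx : 0 < x) (hfx : ContinuousAt f x)
    {η : ℝ} (hη : 0 < η) :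
    ∀ᶠ w in atTop, |expSampling φ f w x - f x| ≤ (2 * B + M) * η := by
  have hfexp : ContinuousAt (fun t => f (exp t)) (log x) := by
    rw [← exp_log hx] at hfx
    exact hfx.comp continuous_exp.continuousAt
  obtain ⟨δ, hδ, hfδ⟩ := Metric.continuousAt_iff.1 hfexp η hη
  obtain ⟨r, hr⟩ := htail η hη
  have hB0 : 0 ≤ B := (abs_nonneg _).trans (hB x hx)
  filter_upwards [eventually_gt_atTop 0, eventually_gt_atTop (r / δ)] with w hw hrw
  have hu : 0 < x ^ w := rpow_pos_of_pos hx w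
  have hfdiff : ∀ k : ℤ, |f (exp (k / w)) - f x| ≤ 2 * B := fun k =>
    (abs_sub _ _).trans (by linarith [hB _ (exp_pos (k / w)), hB x hx])
  have hnear : ∀ k ∉ {k : ℤ | r < |(k : ℝ) - log (x ^ w)|}, |f (exp (k / w)) - f x| ≤ η := by
    intro k hk
    have hdist : dist ((k : ℝ) / w) (log x) < δ := by
      rw [Real.dist_eq, abs_div_sub_log_eq _ hw hx, div_lt_iff₀ hw]
      rw [div_lt_iff₀ hδ] at hrw
      have hk : |(k : ℝ) - log (x ^ w)| ≤ r := not_lt.1 hk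
      linarith
    simpa only [Real.dist_eq, exp_log hx] using (hfδ hdist).le
  have hsplit := abs_tsum_mul_le_of_abs_le_on_compl _ (hsum _ hu) hfdiff hnear hη.le
  rw [← tsum_mul_sub_eq_tsum_sub_mul _ (hsum _ hu).of_abs
    (summable_abs_mul_of_abs_le (hsum _ hu) fun k => hB _ (exp_pos _)).of_abs (hpart _ hu)] at hsplit
  calc |expSampling φ f w x - f x|
      ≤ 2 * B * η + η * M := hsplit.trans <| by
        gcongr
        exacts [(hr r le_rfl _ hu).le, hM _ hu]
    _ = (2 * B + M) * η := by ring

theorem pointwise_convergence_general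
    (φ f : ℝ → ℝ)
    (hsum : ∀ u : ℝ, 0 < u → Summable fun k : ℤ => |φ (Real.exp (-k) * u)|)
    (hpart : ∀ u : ℝ, 0 < u → ∑' k : ℤ, φ (Real.exp (-k) * u) = 1)
    (hM0 : ∃ M : ℝ, ∀ u : ℝ, 0 < u → ∑' k : ℤ, |φ (Real.exp (-k) * u)| ≤ M)
    (htail : ∀ ε > (0:ℝ), ∃ r₀ : ℝ, ∀ r ≥ r₀, ∀ u : ℝ, 0 < u →
      ∑' k : {k : ℤ // r < |(k : ℝ) - Real.log u|}, |φ (Real.exp (-(k:ℤ)) * u)| < ε)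
    (hfbd : ∃ B : ℝ, ∀ x : ℝ, 0 < x → |f x| ≤ B)
    (x : ℝ) (hx : 0 < x) (hfx : ContinuousAt f x) :
    Tendsto (fun w : ℝ => expSampling φ f w x) atTop (nhds (f x)) := by
  obtain ⟨M, hM⟩ := hM0
  obtain ⟨B, hB⟩ := hfbd
  have hpos : 0 < 2 * B + M + 1 := by
    have := (abs_nonneg _).trans (hB x hx)
    have := (tsum_nonneg fun k : ℤ => abs_nonneg (φ (exp (-k) * 1))).trans (hM 1 one_pos)
    linarith
  rw [Metric.tendsto_nhds]
  intro ε hε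
  filter_upwards [eventually_abs_expSampling_sub_le φ f hsum hpart hM htail hB hx hfx
    (div_pos hε hpos)] with w hw
  rw [Real.dist_eq]
  calc _ ≤ (2 * B + M) * (ε / (2 * B + M + 1)) := hw
    _ < (2 * B + M + 1) * (ε / (2 * B + M + 1)) :=
        mul_lt_mul_of_pos_right (lt_add_one _) (div_pos hε hpos)
    _ = ε := mul_div_cancel₀ ε hpos.ne'

/-- Pointwise convergence of the generalized exponential sampling series. -/
theorem pointwise_convergence
    (φ f : ℝ → ℝ)
    (hφcont : ContinuousOn φ (Set.Ioi (0:ℝ)))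
    (hsum : ∀ u : ℝ, 0 < u → Summable fun k : ℤ => |φ (Real.exp (-k) * u)|)
    (hpart : ∀ u : ℝ, 0 < u → ∑' k : ℤ, φ (Real.exp (-k) * u) = 1)
    (hM0 : ∃ M : ℝ, ∀ u : ℝ, 0 < u → ∑' k : ℤ, |φ (Real.exp (-k) * u)| ≤ M)
    (htail : ∀ ε > (0:ℝ), ∃ r₀ : ℝ, ∀ r ≥ r₀, ∀ u : ℝ, 0 < u →
      ∑' k : {k : ℤ // r < |(k : ℝ) - Real.log u|}, |φ (Real.exp (-(k:ℤ)) * u)| < ε)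
    (hfbd : ∃ B : ℝ, ∀ x : ℝ, 0 < x → |f x| ≤ B)
    (x : ℝ) (hx : 0 < x) (hfx : ContinuousAt f x) :
    Tendsto (fun w : ℝ => expSampling φ f w x) atTop (nhds (f x)) :=
  pointwise_convergence_general φ f hsum hpart hM0 htail hfbd x hx hfx
end

section
/- If φ ∈ Φ and f : ℝ⁺ → ℝ is bounded, continuous, and log-uniformly continuous (i.e. for every ε > 0 there is δ > 0 with |f(u) - f(v)| < ε whenever |log u − log v| ≤ δ), then S_w^φ f converges to f uniformly on ℝ⁺ as w → +∞, i.e. lim_{w→∞} sup_{x>0} |(S_w^φ f)(x) − f(x)| = 0. -/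
open Real Filter

/-- Uniform convergence of the generalized exponential sampling series for bounded,
continuous, log-uniformly continuous functions. -/
theorem uniform_convergence
    (φ f : ℝ → ℝ)
    (hφcont : ContinuousOn φ (Set.Ioi (0:ℝ)))
    (hsum : ∀ u : ℝ, 0 < u → Summable fun k : ℤ => |φ (Real.exp (-k) * u)|)
    (hpart : ∀ u : ℝ, 0 < u → ∑' k : ℤ, φ (Real.exp (-k) * u) = 1)
    (hM0 : ∃ M : ℝ, ∀ u : ℝ, 0 < u → ∑' k : ℤ, |φ (Real.exp (-k) * u)| ≤ M)
    (htail : ∀ ε > (0:ℝ), ∃ r₀ : ℝ, ∀ r ≥ r₀, ∀ u : ℝ, 0 < u →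
      ∑' k : {k : ℤ // r < |(k : ℝ) - Real.log u|}, |φ (Real.exp (-(k:ℤ)) * u)| < ε)
    (hfbd : ∃ B : ℝ, ∀ x : ℝ, 0 < x → |f x| ≤ B)
    (hfcont : ContinuousOn f (Set.Ioi (0:ℝ)))
    (hfluc : ∀ ε > (0:ℝ), ∃ δ > (0:ℝ), ∀ u v : ℝ, 0 < u → 0 < v →
      |Real.log u - Real.log v| ≤ δ → |f u - f v| < ε) :
    ∀ ε > (0:ℝ), ∃ W : ℝ, ∀ w ≥ W, ∀ x : ℝ, 0 < x →
      |expSampling φ f w x - f x| < ε := by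
  obtain ⟨M, hM⟩ := hM0
  obtain ⟨B, hB⟩ := hfbd
  have hMnn : 0 ≤ M := le_trans (tsum_nonneg fun k => abs_nonneg _) (hM 1 one_pos)
  have hBnn : 0 ≤ B := le_trans (abs_nonneg _) (hB 1 one_pos)
  intro ε hε
  set ε1 := ε / (2 * (M + 1)) with hε1def
  have hε1 : 0 < ε1 := div_pos hε (by linarith)
  obtain ⟨δ, hδ, hδf⟩ := hfluc ε1 hε1
  set ε2 := ε / (4 * (B + 1)) with hε2def
  have hε2 : 0 < ε2 := div_pos hε (by linarith)
  obtain ⟨r₀, hr₀⟩ := htail ε2 hε2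
  set r := max r₀ 0 with hrdef
  have hr : 0 ≤ r := le_max_right _ _
  refine ⟨max (r / δ) 1, fun w hw x hx => ?_⟩
  have hw1 : (1:ℝ) ≤ w := le_trans (le_max_right _ _) hw
  have hwpos : 0 < w := lt_of_lt_of_le one_pos hw1
  have hrw : r / w ≤ δ := by
    rw [div_le_iff₀ hwpos]
    have h1 : r / δ ≤ w := le_trans (le_max_left _ _) hw
    have : r / δ * δ ≤ w * δ := mul_le_mul_of_nonneg_right h1 hδ.le
    rw [div_mul_cancel₀ _ (ne_of_gt hδ)] at this
    linarith [this]
  set u := x ^ w with hudef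
  have hu : 0 < u := Real.rpow_pos_of_pos hx w
  have hlogu : Real.log u = w * Real.log x := Real.log_rpow hx w
  set h : ℤ → ℝ := fun k => |φ (Real.exp (-k) * u)| with hhdef
  have hsh : Summable h := hsum u hu
  set S : Set ℤ := {k : ℤ | r < |(k : ℝ) - Real.log u|} with hSdef
  have hfb : ∀ k : ℤ, |f (Real.exp (k / w))| ≤ B := fun k => hB _ (Real.exp_pos _)
  have hsum1 : Summable fun k : ℤ => f (Real.exp (k / w)) * φ (Real.exp (-k) * u) := by
    apply Summable.of_abs
    apply Summable.of_nonneg_of_le (fun k => abs_nonneg _) (fun k => ?_) (hsh.mul_left B)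
    rw [abs_mul]
    exact mul_le_mul_of_nonneg_right (hfb k) (abs_nonneg _)
  have hsum2 : Summable fun k : ℤ => f x * φ (Real.exp (-k) * u) := by
    apply Summable.of_abs
    simp only [abs_mul]
    exact hsh.mul_left |f x|
  set g : ℤ → ℝ := fun k => (f (Real.exp (k / w)) - f x) * φ (Real.exp (-k) * u) with hgdef
  have hgs : Summable g := by
    have : g = fun k : ℤ => f (Real.exp (k / w)) * φ (Real.exp (-k) * u)
        - f x * φ (Real.exp (-k) * u) := by
      funext k; simp [hgdef]; ring
    rw [this]
    exact hsum1.sub hsum2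
  have key : expSampling φ f w x - f x = ∑' k : ℤ, g k := by
    have h1 : ∑' k : ℤ, g k
        = (∑' k : ℤ, f (Real.exp (k / w)) * φ (Real.exp (-k) * u))
          - ∑' k : ℤ, f x * φ (Real.exp (-k) * u) := by
      rw [← Summable.tsum_sub hsum1 hsum2]
      congr 1; funext k; simp [hgdef]; ring
    rw [h1, tsum_mul_left, hpart u hu, mul_one]
    rfl
  rw [key]
  set b : ℤ → ℝ := fun k => ε1 * h k + 2 * B * S.indicator h k with hbdef
  have hbs : Summable b := (hsh.mul_left ε1).add ((hsh.indicator S).mul_left (2 * B))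
  have hpt : ∀ k : ℤ, |g k| ≤ b k := by
    intro k
    have habs : |g k| = |f (Real.exp (k / w)) - f x| * h k := by
      simp [hgdef, hhdef, abs_mul]
    by_cases hk : k ∈ S
    · have h2B : |f (Real.exp (k / w)) - f x| ≤ 2 * B := by
        calc |f (Real.exp (k / w)) - f x| ≤ |f (Real.exp (k / w))| + |f x| := abs_sub _ _
          _ ≤ B + B := add_le_add (hfb k) (hB x hx)
          _ = 2 * B := by ring
      have hind : S.indicator h k = h k := Set.indicator_of_mem hk h
      have := mul_le_mul_of_nonneg_right h2B (abs_nonneg (φ (Real.exp (-k) * u)))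
      have hε1h : 0 ≤ ε1 * h k := mul_nonneg hε1.le (abs_nonneg _)
      rw [habs, hbdef]
      simp only [hind]
      nlinarith [this]
    · -- near case
      have hnear : |(k : ℝ) - Real.log u| ≤ r := le_of_not_gt hk
      have hlog : |Real.log (Real.exp (k / w)) - Real.log x| ≤ δ := by
        rw [Real.log_exp]
        have heq : (k : ℝ) / w - Real.log x = ((k : ℝ) - Real.log u) / w := by
          rw [hlogu]; field_simp
        rw [heq, abs_div, abs_of_pos hwpos]
        calc |(k : ℝ) - Real.log u| / w ≤ r / w := by gcongr
          _ ≤ δ := hrw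
      have hflt : |f (Real.exp (k / w)) - f x| < ε1 :=
        hδf _ x (Real.exp_pos _) hx hlog
      have hind : S.indicator h k = 0 := Set.indicator_of_notMem hk h
      rw [habs, hbdef]
      simp only [hind, mul_zero, add_zero]
      exact mul_le_mul_of_nonneg_right hflt.le (abs_nonneg _)
  have habs_le : |∑' k : ℤ, g k| ≤ ∑' k : ℤ, |g k| := by
    have := norm_tsum_le_tsum_norm (f := g) (by simpa using hgs.abs)
    simpa using this
  have hmain : ∑' k : ℤ, |g k| ≤ ε1 * M + 2 * B * ε2 := by
    have step1 : ∑' k : ℤ, |g k| ≤ ∑' k : ℤ, b k := Summable.tsum_le_tsum hpt hgs.abs hbs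
    have step2 : ∑' k : ℤ, b k
        = ε1 * (∑' k : ℤ, h k) + 2 * B * ∑' k : ℤ, S.indicator h k := by
      rw [hbdef, Summable.tsum_add ((hsh.mul_left ε1)) ((hsh.indicator S).mul_left (2 * B)),
        tsum_mul_left, tsum_mul_left]
    have htail1 : ∑' k : ℤ, S.indicator h k < ε2 := by
      have h3 := hr₀ r (le_max_left _ _) u hu
      rw [← tsum_subtype S h]
      exact h3
    have h1 : ε1 * (∑' k : ℤ, h k) ≤ ε1 * M :=
      mul_le_mul_of_nonneg_left (hM u hu) hε1.le
    have h2 : 2 * B * ∑' k : ℤ, S.indicator h k ≤ 2 * B * ε2 :=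
      mul_le_mul_of_nonneg_left htail1.le (by linarith)
    linarith
  have hfinal : ε1 * M + 2 * B * ε2 < ε := by
    have e1 : ε1 * (M + 1) = ε / 2 := by
      rw [hε1def]; field_simp
    have e2 : ε2 * (4 * (B + 1)) = ε := by
      rw [hε2def]; field_simp
    nlinarith [hε1, hε2]
  linarith [habs_le, hmain, hfinal, le_trans habs_le hmain]
end

section
/- Let φ ∈ Φ with first absolute moment M₁(φ) := sup_{x>0} ∑_{k∈ℤ} |φ(e^{-k}x)| |k − log x| < ∞, and let f be bounded and log-uniformly continuous on ℝ⁺. Then for every δ > 0, w > 0, and x > 0: |(S_w^φ f)(x) − f(x)| ≤ M₀(φ) ω(f, δ) + (ω(f,δ)/(wδ)) M₁(φ), where ω(f,δ) := sup{ |f(s) − f(t)| : |log s − log t| ≤ δ }. -/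
/-!
Since `∑ₖ φ(e^{-k}u) = 1`, the error `S_w f(x) - f(x)` is the series of
`(f(e^{k/w}) - f(x)) φ(e^{-k}x^w)`. Chaining `⌈d/δ⌉` steps of logarithmic length at most `δ`
gives `|f s - f t| ≤ (1 + |log s - log t|/δ) ω(f, δ)`, and with `log e^{k/w} - log x = (k - log x^w)/w`
the two parts of this bound sum to at most `ω(f, δ) M₀(φ)` and `ω(f, δ) M₁(φ)/(wδ)`.
-/

open Real Filter

/-- `M₀(φ) = sup_{u>0} ∑_k |φ(e^{-k}u)|`. -/
noncomputable def M0 (φ : ℝ → ℝ) : ℝ :=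
  ⨆ u : Set.Ioi (0:ℝ), ∑' k : ℤ, |φ (Real.exp (-k) * u)|

/-- `M₁(φ) = sup_{x>0} ∑_k |φ(e^{-k}x)| |k - log x|`. -/
noncomputable def M1 (φ : ℝ → ℝ) : ℝ :=
  ⨆ x : Set.Ioi (0:ℝ), ∑' k : ℤ, |φ (Real.exp (-k) * x)| * |(k : ℝ) - Real.log x|

/-- The logarithmic modulus of continuity
`ω(f,δ) = sup {|f s - f t| : s,t > 0, |log s - log t| ≤ δ}`. -/
noncomputable def logModulus (f : ℝ → ℝ) (δ : ℝ) : ℝ :=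
  ⨆ p : {p : ℝ × ℝ // 0 < p.1 ∧ 0 < p.2 ∧ |Real.log p.1 - Real.log p.2| ≤ δ},
    |f (p : ℝ × ℝ).1 - f (p : ℝ × ℝ).2|

section Chaining

variable {g : ℝ → ℝ} {δ ω : ℝ}

theorem abs_sub_le_nat_mul_of_step (hg : ∀ a b, |a - b| ≤ δ → |g a - g b| ≤ ω) (n : ℕ) :
    ∀ a b, |a - b| ≤ n * δ → |g a - g b| ≤ n * ω := by
  induction n with
  | zero =>
    intro a b hab
    rw [Nat.cast_zero, zero_mul, abs_nonpos_iff, sub_eq_zero] at hab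
    simp [hab]
  | succ n ih =>
    intro a b hab
    have hn : (0 : ℝ) < n + 1 := by positivity
    set c := b + (a - b) * (n / (n + 1))
    have hac : |a - c| ≤ δ := by
      have : a - c = (a - b) / (n + 1) := by simp only [c]; field_simp; ring
      rw [this, abs_div, abs_of_pos hn, div_le_iff₀ hn]
      push_cast at hab; linarith
    have hcb : |c - b| ≤ n * δ := by
      have : c - b = (a - b) * n / (n + 1) := by simp only [c]; ring
      rw [this, abs_div, abs_mul, Nat.abs_cast, abs_of_pos hn, div_le_iff₀ hn]
      push_cast at hab
      nlinarith [Nat.cast_nonneg (α := ℝ) n]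
    calc |g a - g b| ≤ |g a - g c| + |g c - g b| := abs_sub_le _ _ _
      _ ≤ ω + n * ω := add_le_add (hg a c hac) (ih c b hcb)
      _ = (n + 1 : ℕ) * ω := by push_cast; ring

theorem abs_sub_le_one_add_div_mul_of_step (hδ : 0 < δ)
    (hg : ∀ a b, |a - b| ≤ δ → |g a - g b| ≤ ω) (a b : ℝ) :
    |g a - g b| ≤ (1 + |a - b| / δ) * ω := by
  have hω : 0 ≤ ω := by simpa using hg a a (by simpa using hδ.le)
  have hq : 0 ≤ |a - b| / δ := by positivity
  set n := ⌈|a - b| / δ⌉₊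
  calc |g a - g b| ≤ n * ω :=
        abs_sub_le_nat_mul_of_step hg n a b ((div_le_iff₀ hδ).mp (Nat.le_ceil _))
    _ ≤ (1 + |a - b| / δ) * ω := by
        gcongr
        linarith [Nat.ceil_lt_add_one hq]

end Chaining

section LogModulus

variable {f : ℝ → ℝ} {δ B : ℝ}

theorem logModulus_bddAbove (hB : ∀ x, 0 < x → |f x| ≤ B) :
    BddAbove (Set.range fun p : {p : ℝ × ℝ // 0 < p.1 ∧ 0 < p.2 ∧
      |Real.log p.1 - Real.log p.2| ≤ δ} => |f (p : ℝ × ℝ).1 - f (p : ℝ × ℝ).2|) := by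
  refine ⟨2 * B, ?_⟩
  rintro y ⟨⟨⟨s, t⟩, hs, ht, -⟩, rfl⟩
  linarith [abs_sub (f s) (f t), hB s hs, hB t ht]

theorem abs_sub_le_logModulus (hB : ∀ x, 0 < x → |f x| ≤ B) {s t : ℝ} (hs : 0 < s) (ht : 0 < t)
    (h : |Real.log s - Real.log t| ≤ δ) : |f s - f t| ≤ logModulus f δ :=
  le_ciSup (logModulus_bddAbove hB) ⟨(s, t), hs, ht, h⟩

theorem logModulus_nonneg (hB : ∀ x, 0 < x → |f x| ≤ B) (hδ : 0 ≤ δ) : 0 ≤ logModulus f δ := by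
  simpa using abs_sub_le_logModulus hB one_pos one_pos (by simpa using hδ)

theorem abs_sub_le_one_add_div_mul_logModulus (hB : ∀ x, 0 < x → |f x| ≤ B) (hδ : 0 < δ)
    {s t : ℝ} (hs : 0 < s) (ht : 0 < t) :
    |f s - f t| ≤ (1 + |Real.log s - Real.log t| / δ) * logModulus f δ := by
  have hstep : ∀ a b, |a - b| ≤ δ → |f (exp a) - f (exp b)| ≤ logModulus f δ := fun a b h =>
    abs_sub_le_logModulus hB (exp_pos a) (exp_pos b) (by simpa using h)
  simpa [exp_log hs, exp_log ht] using
    abs_sub_le_one_add_div_mul_of_step (g := f ∘ exp) hδ hstep (log s) (log t)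

end LogModulus

theorem abs_tsum_mul_le_of_abs_le_add_mul {ι : Type*} {a c m : ι → ℝ} {α β : ℝ}
    (ha : Summable fun i => |a i|)
    (ham : Summable fun i => |a i| * m i) (hc : ∀ i, |c i| ≤ α + β * m i) :
    |∑' i, c i * a i| ≤ α * ∑' i, |a i| + β * ∑' i, |a i| * m i := by
  have hbound : ∀ i, |c i * a i| ≤ α * |a i| + β * (|a i| * m i) := fun i => by
    calc |c i * a i| ≤ (α + β * m i) * |a i| := by
          rw [abs_mul]; exact mul_le_mul_of_nonneg_right (hc i) (abs_nonneg (a i))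
      _ = α * |a i| + β * (|a i| * m i) := by ring
  have hsum : Summable fun i => α * |a i| + β * (|a i| * m i) :=
    (ha.mul_left α).add (ham.mul_left β)
  have habs : Summable fun i => |c i * a i| :=
    .of_nonneg_of_le (fun _ => abs_nonneg _) hbound hsum
  calc |∑' i, c i * a i| ≤ ∑' i, |c i * a i| := by
        simpa only [Real.norm_eq_abs] using
          norm_tsum_le_tsum_norm (f := fun i => c i * a i) (by simpa only [Real.norm_eq_abs])
    _ ≤ ∑' i, (α * |a i| + β * (|a i| * m i)) := habs.tsum_le_tsum hbound hsum
    _ = α * ∑' i, |a i| + β * ∑' i, |a i| * m i := by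
        rw [(ha.mul_left α).tsum_add (ham.mul_left β), tsum_mul_left, tsum_mul_left]

theorem expSampling_sub_eq_tsum {φ f : ℝ → ℝ} {B w x : ℝ} (hB : ∀ x, 0 < x → |f x| ≤ B)
    (hsum : Summable fun k : ℤ => |φ (exp (-k) * x ^ w)|)
    (hpart : ∑' k : ℤ, φ (exp (-k) * x ^ w) = 1) :
    expSampling φ f w x - f x = ∑' k : ℤ, (f (exp (k / w)) - f x) * φ (exp (-k) * x ^ w) := by
  have hsamples : Summable fun k : ℤ => f (exp (k / w)) * φ (exp (-k) * x ^ w) := by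
    refine Summable.of_abs (.of_nonneg_of_le (fun _ => abs_nonneg _) (fun k => ?_)
      (hsum.mul_left B))
    rw [abs_mul]
    exact mul_le_mul_of_nonneg_right (hB _ (exp_pos _)) (abs_nonneg _)
  have hconst : ∑' k : ℤ, f x * φ (exp (-k) * x ^ w) = f x := by
    rw [tsum_mul_left, hpart, mul_one]
  rw [expSampling, ← hconst, ← hsamples.tsum_sub (hsum.of_abs.mul_left (f x))]
  simp only [sub_mul, hconst]

theorem quantitative_estimate_general
    (φ f : ℝ → ℝ)
    (hsum : ∀ u : ℝ, 0 < u → Summable fun k : ℤ => |φ (Real.exp (-k) * u)|)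
    (hpart : ∀ u : ℝ, 0 < u → ∑' k : ℤ, φ (Real.exp (-k) * u) = 1)
    (hM0 : BddAbove (Set.range fun u : Set.Ioi (0:ℝ) =>
      ∑' k : ℤ, |φ (Real.exp (-k) * u)|))
    (hsum1 : ∀ x : ℝ, 0 < x →
      Summable fun k : ℤ => |φ (Real.exp (-k) * x)| * |(k : ℝ) - Real.log x|)
    (hM1 : BddAbove (Set.range fun x : Set.Ioi (0:ℝ) =>
      ∑' k : ℤ, |φ (Real.exp (-k) * x)| * |(k : ℝ) - Real.log x|))
    (hfbd : ∃ B : ℝ, ∀ x : ℝ, 0 < x → |f x| ≤ B) :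
    ∀ δ > (0:ℝ), ∀ w > (0:ℝ), ∀ x > (0:ℝ),
      |expSampling φ f w x - f x| ≤
        M0 φ * logModulus f δ + logModulus f δ / (w * δ) * M1 φ := by
  obtain ⟨B, hB⟩ := hfbd
  intro δ hδ w hw x hx
  have hu : 0 < x ^ w := rpow_pos_of_pos hx w
  have hω : 0 ≤ logModulus f δ := logModulus_nonneg hB hδ.le
  have hsample : ∀ k : ℤ, |f (exp (k / w)) - f x|
      ≤ logModulus f δ + logModulus f δ / (w * δ) * |(k : ℝ) - log (x ^ w)| := fun k => by
    have hlog : |log (exp (k / w)) - log x| = |(k : ℝ) - log (x ^ w)| / w := by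
      rw [log_exp, log_rpow hx, show (k : ℝ) / w - log x = (k - w * log x) / w by field_simp,
        abs_div, abs_of_pos hw]
    calc |f (exp (k / w)) - f x|
        ≤ (1 + |log (exp (k / w)) - log x| / δ) * logModulus f δ :=
          abs_sub_le_one_add_div_mul_logModulus hB hδ (exp_pos _) hx
      _ = _ := by rw [hlog]; field_simp
  rw [expSampling_sub_eq_tsum hB (hsum _ hu) (hpart _ hu)]
  refine (abs_tsum_mul_le_of_abs_le_add_mul (hsum _ hu) (hsum1 _ hu) hsample).trans ?_
  rw [mul_comm (M0 φ)]
  gcongr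
  · exact le_ciSup hM0 ⟨_, hu⟩
  · exact le_ciSup hM1 ⟨_, hu⟩

/-- Quantitative estimate for the generalized exponential sampling series. -/
theorem quantitative_estimate
    (φ f : ℝ → ℝ)
    (hφcont : ContinuousOn φ (Set.Ioi (0:ℝ)))
    (hsum : ∀ u : ℝ, 0 < u → Summable fun k : ℤ => |φ (Real.exp (-k) * u)|)
    (hpart : ∀ u : ℝ, 0 < u → ∑' k : ℤ, φ (Real.exp (-k) * u) = 1)
    (hM0 : BddAbove (Set.range fun u : Set.Ioi (0:ℝ) =>
      ∑' k : ℤ, |φ (Real.exp (-k) * u)|))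
    (hsum1 : ∀ x : ℝ, 0 < x →
      Summable fun k : ℤ => |φ (Real.exp (-k) * x)| * |(k : ℝ) - Real.log x|)
    (hM1 : BddAbove (Set.range fun x : Set.Ioi (0:ℝ) =>
      ∑' k : ℤ, |φ (Real.exp (-k) * x)| * |(k : ℝ) - Real.log x|))
    (hfbd : ∃ B : ℝ, ∀ x : ℝ, 0 < x → |f x| ≤ B)
    (hfluc : ∀ ε > (0:ℝ), ∃ δ > (0:ℝ), ∀ u v : ℝ, 0 < u → 0 < v →
      |Real.log u - Real.log v| ≤ δ → |f u - f v| < ε) :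
    ∀ δ > (0:ℝ), ∀ w > (0:ℝ), ∀ x > (0:ℝ),
      |expSampling φ f w x - f x| ≤
        M0 φ * logModulus f δ + logModulus f δ / (w * δ) * M1 φ :=
  quantitative_estimate_general φ f hsum hpart hM0 hsum1 hM1 hfbd
end

section
/- Under the assumptions that φ ∈ Φ with M₁(φ) < ∞ and f is bounded and log-uniformly continuous on ℝ⁺, there holds for all w > 0 and x > 0: |(S_w^φ f)(x) − f(x)| ≤ C ω(f, 1/w), where C = M₀(φ) + M₁(φ). -/
open Real Filter

set_option maxHeartbeats 1000000 in
/-- Quantitative estimate for the generalized exponential sampling series. -/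
theorem quantitative_corollary
    (φ f : ℝ → ℝ)
    (hφcont : ContinuousOn φ (Set.Ioi (0:ℝ)))
    (hsum : ∀ u : ℝ, 0 < u → Summable fun k : ℤ => |φ (Real.exp (-k) * u)|)
    (hpart : ∀ u : ℝ, 0 < u → ∑' k : ℤ, φ (Real.exp (-k) * u) = 1)
    (hM0 : BddAbove (Set.range fun u : Set.Ioi (0:ℝ) =>
      ∑' k : ℤ, |φ (Real.exp (-k) * u)|))
    (hsum1 : ∀ x : ℝ, 0 < x →
      Summable fun k : ℤ => |φ (Real.exp (-k) * x)| * |(k : ℝ) - Real.log x|)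
    (hM1 : BddAbove (Set.range fun x : Set.Ioi (0:ℝ) =>
      ∑' k : ℤ, |φ (Real.exp (-k) * x)| * |(k : ℝ) - Real.log x|))
    (hfbd : ∃ B : ℝ, ∀ x : ℝ, 0 < x → |f x| ≤ B)
    (hfluc : ∀ ε > (0:ℝ), ∃ δ > (0:ℝ), ∀ u v : ℝ, 0 < u → 0 < v →
      |Real.log u - Real.log v| ≤ δ → |f u - f v| < ε) :
    ∀ w > (0:ℝ), ∀ x > (0:ℝ),
      |expSampling φ f w x - f x| ≤ (M0 φ + M1 φ) * logModulus f (1 / w) := by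
  obtain ⟨B, hB⟩ := hfbd
  have hB0 : 0 ≤ B := le_trans (abs_nonneg _) (hB 1 one_pos)
  intro w hw x hx
  set δ : ℝ := 1 / w with hδdef
  have hδ0 : 0 < δ := by positivity
  set Ω : ℝ := logModulus f δ with hΩdef
  -- boundedness of the modulus index family
  have hbdd : BddAbove (Set.range fun p :
      {p : ℝ × ℝ // 0 < p.1 ∧ 0 < p.2 ∧ |Real.log p.1 - Real.log p.2| ≤ δ} =>
      |f (p : ℝ × ℝ).1 - f (p : ℝ × ℝ).2|) := by
    refine ⟨2 * B, ?_⟩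
    rintro y ⟨⟨⟨s, t⟩, hs, ht, _⟩, rfl⟩
    calc |f s - f t| ≤ |f s| + |f t| := abs_sub _ _
      _ ≤ B + B := add_le_add (hB s hs) (hB t ht)
      _ = 2 * B := by ring
  have hΩ0 : 0 ≤ Ω := Real.iSup_nonneg fun p => abs_nonneg _
  have hpair : ∀ s t : ℝ, 0 < s → 0 < t → |Real.log s - Real.log t| ≤ δ →
      |f s - f t| ≤ Ω := by
    intro s t hs ht hd
    exact le_ciSup hbdd ⟨(s, t), hs, ht, hd⟩
  -- subadditivity: n steps
  have hstep : ∀ n : ℕ, ∀ s t : ℝ, 0 < s → 0 < t →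
      |Real.log s - Real.log t| ≤ n * δ → |f s - f t| ≤ n * Ω := by
    intro n
    induction n with
    | zero =>
      intro s t hs ht hd
      simp only [Nat.cast_zero, zero_mul] at hd ⊢
      have : Real.log s = Real.log t := by
        have := abs_nonneg (Real.log s - Real.log t)
        have : |Real.log s - Real.log t| = 0 := le_antisymm hd this
        linarith [abs_eq_zero.mp this, sub_eq_zero.mp (abs_eq_zero.mp this)]
      have hst : s = t := Real.log_injOn_pos (Set.mem_Ioi.mpr hs) (Set.mem_Ioi.mpr ht) this
      simp [hst]
    | succ n ih =>
      intro s t hs ht hd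
      set d : ℝ := Real.log s - Real.log t with hddef
      have hn1 : (0:ℝ) < (n:ℝ) + 1 := by positivity
      set u : ℝ := Real.exp (Real.log t + d * (n / (n + 1))) with hudef
      have hu : 0 < u := Real.exp_pos _
      have hlogu : Real.log u = Real.log t + d * (n / (n + 1)) := Real.log_exp _
      have h1 : |Real.log s - Real.log u| ≤ δ := by
        rw [hlogu]
        have : Real.log s - (Real.log t + d * (n / (n + 1))) = d * (1 / (n + 1)) := by
          rw [hddef]; field_simp; ring
        rw [this, abs_mul]
        rw [Nat.cast_succ] at hd
        have hdd : |d| ≤ ((n:ℝ) + 1) * δ := hd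
        have : |(1:ℝ) / ((n:ℝ) + 1)| = 1 / ((n:ℝ) + 1) := abs_of_pos (by positivity)
        rw [this]
        rw [div_eq_mul_inv, ← mul_assoc]
        calc |d| * 1 * ((n:ℝ)+1)⁻¹ = |d| * ((n:ℝ)+1)⁻¹ := by ring
          _ ≤ (((n:ℝ)+1) * δ) * ((n:ℝ)+1)⁻¹ :=
              mul_le_mul_of_nonneg_right hdd (by positivity)
          _ = δ := by field_simp
      have h2 : |Real.log u - Real.log t| ≤ n * δ := by
        rw [hlogu]
        have : Real.log t + d * (n / (n + 1)) - Real.log t = d * ((n:ℝ) / ((n:ℝ) + 1)) := by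
          ring
        rw [this, abs_mul]
        rw [Nat.cast_succ] at hd
        have hdd : |d| ≤ ((n:ℝ) + 1) * δ := hd
        have habs : |(n:ℝ) / ((n:ℝ) + 1)| = (n:ℝ) / ((n:ℝ) + 1) :=
          abs_of_nonneg (by positivity)
        rw [habs]
        calc |d| * ((n:ℝ) / ((n:ℝ)+1)) ≤ (((n:ℝ)+1) * δ) * ((n:ℝ) / ((n:ℝ)+1)) :=
              mul_le_mul_of_nonneg_right hdd (by positivity)
          _ = (n:ℝ) * δ := by field_simp
      calc |f s - f t| = |(f s - f u) + (f u - f t)| := by ring_nf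
        _ ≤ |f s - f u| + |f u - f t| := abs_add_le _ _
        _ ≤ Ω + (n:ℝ) * Ω := add_le_add (hpair s u hs hu h1) (ih u t hu ht h2)
        _ = ((n:ℝ) + 1) * Ω := by ring
        _ = ((n + 1 : ℕ) : ℝ) * Ω := by push_cast; ring
  -- modulus bound with factor (1 + w d)
  have hmod : ∀ s t : ℝ, 0 < s → 0 < t →
      |f s - f t| ≤ (1 + w * |Real.log s - Real.log t|) * Ω := by
    intro s t hs ht
    set d : ℝ := |Real.log s - Real.log t| with hddef
    have hd0 : 0 ≤ d := abs_nonneg _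
    set n : ℕ := ⌈w * d⌉₊ with hndef
    have hwd : w * d ≤ n := Nat.le_ceil _
    have hdle : d ≤ n * δ := by
      have h : d = (w * d) * δ := by rw [hδdef]; field_simp
      rw [h]
      exact mul_le_mul_of_nonneg_right hwd hδ0.le
    have hnlt : (n : ℝ) < w * d + 1 := Nat.ceil_lt_add_one (by positivity)
    calc |f s - f t| ≤ n * Ω := hstep n s t hs ht hdle
      _ ≤ (1 + w * d) * Ω := by nlinarith
  -- main computation
  have hu : 0 < x ^ w := Real.rpow_pos_of_pos hx w
  set u : ℝ := x ^ w with hudef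
  have hlogu : Real.log u = w * Real.log x := Real.log_rpow hx w
  have hsφa : Summable fun k : ℤ => |φ (Real.exp (-k) * u)| := hsum u hu
  have hsφ : Summable fun k : ℤ => φ (Real.exp (-k) * u) := hsφa.of_abs
  have hsg : Summable fun k : ℤ => f (Real.exp (k / w)) * φ (Real.exp (-k) * u) := by
    apply Summable.of_abs
    apply Summable.of_nonneg_of_le (fun k => abs_nonneg _) ?_ (hsφa.mul_left B)
    intro k
    rw [abs_mul]
    exact mul_le_mul_of_nonneg_right (hB _ (Real.exp_pos _)) (abs_nonneg _)
  -- term bound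
  have hterm : ∀ k : ℤ,
      |(f (Real.exp (k / w)) - f x) * φ (Real.exp (-k) * u)| ≤
        Ω * (|φ (Real.exp (-k) * u)| + |φ (Real.exp (-k) * u)| * |(k:ℝ) - Real.log u|) := by
    intro k
    rw [abs_mul]
    have hlg : Real.log (Real.exp ((k:ℝ) / w)) = (k:ℝ) / w := Real.log_exp _
    have hd : w * |Real.log (Real.exp ((k:ℝ) / w)) - Real.log x| = |(k:ℝ) - Real.log u| := by
      rw [hlg, hlogu,
        show ((k:ℝ) - w * Real.log x) = w * ((k:ℝ) / w - Real.log x) by field_simp,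
        abs_mul, abs_of_pos hw]
    have h1 : |f (Real.exp ((k:ℝ) / w)) - f x| ≤ (1 + |(k:ℝ) - Real.log u|) * Ω := by
      have := hmod (Real.exp ((k:ℝ) / w)) x (Real.exp_pos _) hx
      rwa [hd] at this
    calc |f (Real.exp ((k:ℝ) / w)) - f x| * |φ (Real.exp (-k) * u)|
        ≤ ((1 + |(k:ℝ) - Real.log u|) * Ω) * |φ (Real.exp (-k) * u)| :=
          mul_le_mul_of_nonneg_right h1 (abs_nonneg _)
      _ = Ω * (|φ (Real.exp (-k) * u)| + |φ (Real.exp (-k) * u)| * |(k:ℝ) - Real.log u|) := by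
          ring
  have hsrhs : Summable fun k : ℤ =>
      Ω * (|φ (Real.exp (-k) * u)| + |φ (Real.exp (-k) * u)| * |(k:ℝ) - Real.log u|) :=
    ((hsum u hu).add (hsum1 u hu)).mul_left Ω
  have hsh : Summable fun k : ℤ => |(f (Real.exp (k / w)) - f x) * φ (Real.exp (-k) * u)| :=
    Summable.of_nonneg_of_le (fun k => abs_nonneg _) hterm hsrhs
  -- rewrite the difference as a tsum
  have hdiff : expSampling φ f w x - f x =
      ∑' k : ℤ, (f (Real.exp (k / w)) - f x) * φ (Real.exp (-k) * u) := by
    have h1 : (fun k : ℤ => (f (Real.exp (k / w)) - f x) * φ (Real.exp (-k) * u)) =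
        fun k : ℤ => f (Real.exp (k / w)) * φ (Real.exp (-k) * u) -
          f x * φ (Real.exp (-k) * u) := by
      funext k; ring
    rw [h1, Summable.tsum_sub hsg (hsφ.mul_left (f x)), tsum_mul_left, hpart u hu, mul_one]
    rfl
  rw [hdiff]
  calc |∑' k : ℤ, (f (Real.exp (k / w)) - f x) * φ (Real.exp (-k) * u)|
      ≤ ∑' k : ℤ, |(f (Real.exp (k / w)) - f x) * φ (Real.exp (-k) * u)| := by
        have h := norm_tsum_le_tsum_norm
          (f := fun k : ℤ => (f (Real.exp (k / w)) - f x) * φ (Real.exp (-k) * u))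
          (by simp only [Real.norm_eq_abs]; exact hsh)
        simp only [Real.norm_eq_abs] at h
        exact h
    _ ≤ ∑' k : ℤ, Ω * (|φ (Real.exp (-k) * u)| + |φ (Real.exp (-k) * u)| * |(k:ℝ) - Real.log u|) :=
        Summable.tsum_le_tsum hterm hsh hsrhs
    _ = Ω * ((∑' k : ℤ, |φ (Real.exp (-k) * u)|) +
          ∑' k : ℤ, |φ (Real.exp (-k) * u)| * |(k:ℝ) - Real.log u|) := by
        rw [tsum_mul_left, Summable.tsum_add (hsum u hu) (hsum1 u hu)]
    _ ≤ Ω * (M0 φ + M1 φ) := by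
        have h0 : (∑' k : ℤ, |φ (Real.exp (-k) * u)|) ≤ M0 φ :=
          le_ciSup hM0 (⟨u, Set.mem_Ioi.mpr hu⟩ : Set.Ioi (0:ℝ))
        have h1 : (∑' k : ℤ, |φ (Real.exp (-k) * u)| * |(k:ℝ) - Real.log u|) ≤ M1 φ :=
          le_ciSup hM1 (⟨u, Set.mem_Ioi.mpr hu⟩ : Set.Ioi (0:ℝ))
        have hsum0 : 0 ≤ ∑' k : ℤ, |φ (Real.exp (-k) * u)| :=
          tsum_nonneg fun k => abs_nonneg _
        have hsum1' : 0 ≤ ∑' k : ℤ, |φ (Real.exp (-k) * u)| * |(k:ℝ) - Real.log u| :=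
          tsum_nonneg fun k => mul_nonneg (abs_nonneg _) (abs_nonneg _)
        nlinarith
    _ = (M0 φ + M1 φ) * Ω := by ring
end

section
/- Let φ be a continuous kernel with ∑_{k∈ℤ} φ(e^{-k}u) = 1 for all u > 0, with all algebraic moments m_j(φ) := ∑_k φ(e^{-k}x)(k − log x)^j independent of x for 0 ≤ j ≤ n, with M_n(φ) := sup_x ∑_k |φ(e^{-k}x)||k − log x|^n < ∞, and with ∑_{|k−log u|>r} |φ(e^{-k}u)||k − log u|^n → 0 uniformly in u as r → ∞. If f ∈ C(ℝ⁺) is n-times differentiable at x > 0 (of class C^{(n)} locally at x), then (S_w^φ f)(x) − f(x) = ∑_{j=1}^{n} (Θ^j f)(x)/j! · m_j(φ)/w^j + o(w^{-n}) as w → +∞, where Θ is the Mellin derivative Θf(x) = x f'(x). -/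
/-!
With `g s = f (exp s)`, the Mellin derivatives of `f` at `x` are the ordinary derivatives of `g`
at `log x`, and the Stirling expansion `Θ^r = ∑ S(r,k) x^k D^k` shows that `g` inherits the
local regularity of `f`. Since `e^{k/w} = x · exp ((k - log x^w) / w)`, Taylor's formula for `g`
at `log x` turns the sampling series into `∑_j Θ^j f(x)/j! · m_j/w^j` plus the kernel applied to
the remainder `R(s) = o(s^n)`. As `f` is bounded, `|R s| ≤ K |s|^n` everywhere; so the remainder
series is at most `ε M_n / w^n` on the indices with `|k - log x^w| ≤ δ w`, and at most `K / w^n`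
times the kernel tail beyond `δ w`, which is small uniformly in `x^w`.
-/

open Real Filter Asymptotics

/-- The Mellin differential operator (with `c = 0`): `Θf(x) = x f'(x)`. -/
noncomputable def mellinD (f : ℝ → ℝ) : ℝ → ℝ := fun x => x * deriv f x

/-- `f` is of class `C^{(n)}` locally at `x`: `f` is `(n-1)`-times differentiable in a
neighbourhood of `x` and the `n`-th derivative exists at `x`. -/
def LocallyCn (n : ℕ) (f : ℝ → ℝ) (x : ℝ) : Prop :=
  (∀ m < n - 1, ∀ᶠ y in nhds x, DifferentiableAt ℝ (iteratedDeriv m f) y) ∧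
    DifferentiableAt ℝ (iteratedDeriv (n - 1) f) x

open Set Finset Topology

theorem LocallyCn.deriv {n : ℕ} {g : ℝ → ℝ} {a : ℝ} (hg : LocallyCn (n + 2) g a) :
    LocallyCn (n + 1) (deriv g) a := by
  refine ⟨fun m hm => ?_, ?_⟩ <;> simp only [← iteratedDeriv_succ']
  · exact hg.1 (m + 1) (by omega)
  · exact hg.2

theorem LocallyCn.eventually_differentiableAt {n : ℕ} {g : ℝ → ℝ} {a : ℝ}
    (hg : LocallyCn (n + 2) g a) : ∀ᶠ y in 𝓝 a, DifferentiableAt ℝ g y := by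
  simpa using hg.1 0 (by omega)

theorem taylor_isLittleO_of_locallyCn {g : ℝ → ℝ} {a : ℝ} :
    ∀ {n : ℕ}, LocallyCn (n + 1) g a →
      (fun y => g y - taylorWithinEval g (n + 1) univ a y) =o[𝓝 a] fun y => (y - a) ^ (n + 1)
  | 0, hg => by
    have hd : HasDerivAt g (deriv g a) a := by simpa using hg.2.hasDerivAt
    refine (hasDerivAt_iff_isLittleO.mp hd).congr (fun y => ?_) (fun y => by simp)
    simp [taylor_within_apply, iteratedDerivWithin_univ]
    ring
  | n + 1, hg => by
    obtain ⟨δ, hδ, hball⟩ := Metric.eventually_nhds_iff_ball.mp hg.eventually_differentiableAt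
    have hF : ∀ y ∈ Metric.ball a δ, HasDerivWithinAt
        (fun y => g y - taylorWithinEval g (n + 2) univ a y)
        (deriv g y - taylorWithinEval (deriv g) (n + 1) univ a y) (Metric.ball a δ) y := by
      intro y hy
      have := (hball y hy).hasDerivAt.sub (hasDerivAt_taylorWithinEval_succ g (n + 1) (s := univ)
        (x₀ := a) (x := y))
      rw [derivWithin_univ] at this
      exact this.hasDerivWithinAt
    have := (convex_ball a δ).isLittleO_pow_succ_real (Metric.mem_ball_self hδ) hF
      ((taylor_isLittleO_of_locallyCn hg.deriv).mono nhdsWithin_le_nhds)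
    rw [Metric.isOpen_ball.nhdsWithin_eq (Metric.mem_ball_self hδ)] at this
    simpa using this

namespace Nat

theorem sum_stirlingSecond_succ_mul {R : Type*} [CommSemiring R] (c : ℕ → R) (m : ℕ) :
    ∑ k ∈ range (m + 2), (stirlingSecond (m + 1) k : R) * c k =
      ∑ k ∈ range (m + 1), (stirlingSecond m k : R) * (k * c k + c (k + 1)) := by
  have hshift : ∑ k ∈ range (m + 1), ((k : R) + 1) * stirlingSecond m (k + 1) * c (k + 1) =
      ∑ k ∈ range (m + 1), (k : R) * stirlingSecond m k * c k := by
    rw [sum_range_succ, stirlingSecond_eq_zero_of_lt (lt_add_one m), sum_range_succ' _ m]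
    simp
  have hsplit : ∀ k ∈ range (m + 1), (stirlingSecond m k : R) * (k * c k + c (k + 1)) =
      k * stirlingSecond m k * c k + stirlingSecond m k * c (k + 1) := fun k _ => by ring
  rw [sum_range_succ', stirlingSecond_succ_zero, cast_zero, zero_mul, add_zero,
    sum_congr rfl hsplit, sum_add_distrib, ← hshift, ← sum_add_distrib]
  refine sum_congr rfl fun k _ => ?_
  rw [stirlingSecond_succ_succ]
  push_cast
  ring

end Nat

theorem hasDerivAt_pow_mul_iteratedDeriv {f : ℝ → ℝ} {k : ℕ} {y : ℝ}
    (h : DifferentiableAt ℝ (iteratedDeriv k f) y) :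
    HasDerivAt (fun z => z ^ k * iteratedDeriv k f z)
      (k * y ^ (k - 1) * iteratedDeriv k f y + y ^ k * iteratedDeriv (k + 1) f y) y := by
  rw [iteratedDeriv_succ]
  exact (hasDerivAt_pow k y).mul h.hasDerivAt

theorem mellinD_iterate_eqOn {f : ℝ → ℝ} {U : Set ℝ} (hU : IsOpen U) :
    ∀ {m : ℕ}, (∀ k < m, DifferentiableOn ℝ (iteratedDeriv k f) U) →
      EqOn (mellinD^[m] f)
        (fun y => ∑ k ∈ range (m + 1), (Nat.stirlingSecond m k : ℝ) * (y ^ k * iteratedDeriv k f y))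
        U
  | 0, _ => fun y _ => by simp
  | m + 1, hf => fun y hy => by
    have hdiff : ∀ k ∈ range (m + 1), DifferentiableAt ℝ (iteratedDeriv k f) y :=
      fun k hk => (hf k (by simpa using hk)).differentiableAt (hU.mem_nhds hy)
    have hsum := HasDerivAt.fun_sum fun k hk =>
      (hasDerivAt_pow_mul_iteratedDeriv (hdiff k hk)).const_mul (Nat.stirlingSecond m k : ℝ)
    have heq := (mellinD_iterate_eqOn hU (m := m) fun k hk => hf k (by omega)).eventuallyEq_of_mem
      (hU.mem_nhds hy)
    calc mellinD^[m + 1] f y = y * deriv (mellinD^[m] f) y := by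
          rw [Function.iterate_succ_apply']; rfl
      _ = ∑ k ∈ range (m + 1), (Nat.stirlingSecond m k : ℝ) *
            (k * (y ^ k * iteratedDeriv k f y) + y ^ (k + 1) * iteratedDeriv (k + 1) f y) := by
          rw [heq.deriv_eq, hsum.deriv, mul_sum]
          refine sum_congr rfl fun k _ => ?_
          cases k <;> simp only [pow_succ, Nat.add_sub_cancel] <;> push_cast <;> ring
      _ = _ := (Nat.sum_stirlingSecond_succ_mul _ m).symm

theorem differentiableAt_mellinD_iterate {f : ℝ → ℝ} {U : Set ℝ} {m : ℕ} {y : ℝ} (hU : IsOpen U)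
    (hy : y ∈ U) (hf : ∀ k < m, DifferentiableOn ℝ (iteratedDeriv k f) U)
    (hm : DifferentiableAt ℝ (iteratedDeriv m f) y) :
    DifferentiableAt ℝ (mellinD^[m] f) y := by
  rw [((mellinD_iterate_eqOn hU hf).eventuallyEq_of_mem (hU.mem_nhds hy)).differentiableAt_iff]
  refine DifferentiableAt.fun_sum fun k hk => ?_
  refine (differentiableAt_const _).mul ((differentiableAt_pow k).mul ?_)
  rcases (Nat.lt_succ_iff.mp (mem_range.mp hk)).lt_or_eq with hlt | rfl
  · exact (hf k hlt).differentiableAt (hU.mem_nhds hy)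
  · exact hm

theorem LocallyCn.exists_isOpen_differentiableOn {n : ℕ} {f : ℝ → ℝ} {x : ℝ}
    (hf : LocallyCn (n + 1) f x) :
    ∃ U, IsOpen U ∧ x ∈ U ∧ ∀ k < n, DifferentiableOn ℝ (iteratedDeriv k f) U := by
  have hall : ∀ᶠ y in 𝓝 x, ∀ k ∈ Set.Iio n, DifferentiableAt ℝ (iteratedDeriv k f) y :=
    (Filter.eventually_all_finite (Set.finite_Iio n)).mpr hf.1
  obtain ⟨U, hUsub, hU, hxU⟩ := eventually_nhds_iff.mp hall
  exact ⟨U, hU, hxU, fun k hk y hy => (hUsub y hy k hk).differentiableWithinAt⟩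

theorem LocallyCn.exists_isOpen_differentiableOn_mellinD_iterate {n : ℕ} {f : ℝ → ℝ} {x : ℝ}
    (hf : LocallyCn (n + 1) f x) :
    ∃ U, IsOpen U ∧ x ∈ U ∧ (∀ k < n, DifferentiableOn ℝ (mellinD^[k] f) U) ∧
      DifferentiableAt ℝ (mellinD^[n] f) x := by
  obtain ⟨U, hU, hxU, hfU⟩ := hf.exists_isOpen_differentiableOn
  refine ⟨U, hU, hxU, fun k hk y hy => ?_, differentiableAt_mellinD_iterate hU hxU hfU hf.2⟩
  exact (differentiableAt_mellinD_iterate hU hy (fun i hi => hfU i (by omega))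
    ((hfU k hk).differentiableAt (hU.mem_nhds hy))).differentiableWithinAt

theorem iteratedDeriv_succ_comp_exp {f : ℝ → ℝ} {m : ℕ} {s : ℝ}
    (heq : iteratedDeriv m (fun s => f (exp s)) =ᶠ[𝓝 s] fun s => mellinD^[m] f (exp s))
    (hd : DifferentiableAt ℝ (mellinD^[m] f) (exp s)) :
    iteratedDeriv (m + 1) (fun s => f (exp s)) s = mellinD^[m + 1] f (exp s) := by
  have hcomp : HasDerivAt (fun s => mellinD^[m] f (exp s))
      (deriv (mellinD^[m] f) (exp s) * exp s) s := hd.hasDerivAt.comp s (hasDerivAt_exp s)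
  rw [iteratedDeriv_succ, heq.deriv_eq, hcomp.deriv, Function.iterate_succ_apply', mellinD,
    mul_comm]

theorem iteratedDeriv_comp_exp_eqOn {f : ℝ → ℝ} {U : Set ℝ} {n : ℕ} (hU : IsOpen U)
    (hf : ∀ k < n, DifferentiableOn ℝ (mellinD^[k] f) U) :
    ∀ m ≤ n, EqOn (iteratedDeriv m fun s => f (exp s)) (fun s => mellinD^[m] f (exp s))
      (exp ⁻¹' U)
  | 0, _ => fun s _ => by simp
  | m + 1, hm => fun s hs => by
    have hV : IsOpen (exp ⁻¹' U) := hU.preimage continuous_exp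
    exact iteratedDeriv_succ_comp_exp
      ((iteratedDeriv_comp_exp_eqOn hU hf m (by omega)).eventuallyEq_of_mem (hV.mem_nhds hs))
      ((hf m (by omega)).differentiableAt (hU.mem_nhds hs))

theorem LocallyCn.comp_exp_and_iteratedDeriv_eq {n : ℕ} {f : ℝ → ℝ} {x : ℝ} (hx : 0 < x)
    (hf : LocallyCn (n + 1) f x) :
    LocallyCn (n + 1) (fun s => f (exp s)) (log x) ∧
      ∀ j ≤ n + 1, iteratedDeriv j (fun s => f (exp s)) (log x) = mellinD^[j] f x := by
  obtain ⟨U, hU, hxU, hfU, hfx⟩ := hf.exists_isOpen_differentiableOn_mellinD_iterate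
  have hV : IsOpen (exp ⁻¹' U) := hU.preimage continuous_exp
  have haV : log x ∈ exp ⁻¹' U := by simpa [exp_log hx] using hxU
  have heq : ∀ m ≤ n, iteratedDeriv m (fun s => f (exp s)) =ᶠ[𝓝 (log x)]
      fun s => mellinD^[m] f (exp s) := fun m hm =>
    (iteratedDeriv_comp_exp_eqOn hU hfU m hm).eventuallyEq_of_mem (hV.mem_nhds haV)
  have hfx' : DifferentiableAt ℝ (mellinD^[n] f) (exp (log x)) := by rwa [exp_log hx]
  refine ⟨⟨fun m hm => ?_, ?_⟩, fun j hj => ?_⟩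
  · replace hm : m < n := by omega
    filter_upwards [hV.mem_nhds haV] with s hs
    rw [((iteratedDeriv_comp_exp_eqOn hU hfU m hm.le).eventuallyEq_of_mem
      (hV.mem_nhds hs)).differentiableAt_iff]
    exact ((hfU m hm).differentiableAt (hU.mem_nhds hs)).comp s differentiableAt_exp
  · rw [Nat.add_sub_cancel, (heq n le_rfl).differentiableAt_iff]
    exact hfx'.comp _ differentiableAt_exp
  · rcases Nat.lt_or_eq_of_le hj with hlt | rfl
    · rw [(heq j (by omega)).eq_of_nhds, exp_log hx]
    · rw [iteratedDeriv_succ_comp_exp (heq n le_rfl) hfx', exp_log hx]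

/-- The remainder `h(t) log^n t` of the Mellin–Taylor formula, in the variable `s = log t`. -/
noncomputable def mellinTaylorRemainder (f : ℝ → ℝ) (n : ℕ) (x s : ℝ) : ℝ :=
  f (x * exp s) - ∑ j ∈ range (n + 1), mellinD^[j] f x * s ^ j / j.factorial

theorem isLittleO_mellinTaylorRemainder {n : ℕ} {f : ℝ → ℝ} {x : ℝ} (hx : 0 < x)
    (hf : LocallyCn (n + 1) f x) :
    mellinTaylorRemainder f (n + 1) x =o[𝓝 0] fun s => s ^ (n + 1) := by
  obtain ⟨hg, hcoef⟩ := hf.comp_exp_and_iteratedDeriv_eq hx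
  have ht : Tendsto (fun s => log x + s) (𝓝 0) (𝓝 (log x)) := by
    simpa using tendsto_const_nhds.add (tendsto_id (x := 𝓝 (0 : ℝ)))
  refine ((taylor_isLittleO_of_locallyCn hg).comp_tendsto ht).congr (fun s => ?_) (fun s => by simp)
  simp only [Function.comp, mellinTaylorRemainder, taylor_within_apply, iteratedDerivWithin_univ,
    exp_add, exp_log hx, add_sub_cancel_left, smul_eq_mul]
  congr 1
  refine sum_congr rfl fun j hj => ?_
  rw [hcoef j (by simpa [Nat.lt_succ_iff] using hj)]
  ring

theorem pow_le_one_add_pow {r : ℝ} (hr : 0 ≤ r) {j n : ℕ} (hj : j ≤ n) : r ^ j ≤ 1 + r ^ n := by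
  rcases le_total r 1 with h | h
  · linarith [pow_le_one₀ hr h (n := j), pow_nonneg hr n]
  · linarith [pow_le_pow_right₀ h hj]

theorem abs_mellinTaylorRemainder_le {f : ℝ → ℝ} {B : ℝ} (hB : ∀ y, 0 < y → |f y| ≤ B) {x : ℝ}
    (hx : 0 < x) (n : ℕ) (s : ℝ) :
    |mellinTaylorRemainder f n x s| ≤
      (B + ∑ j ∈ range (n + 1), |mellinD^[j] f x| / j.factorial) * (1 + |s| ^ n) := by
  have hB0 : 0 ≤ B := (abs_nonneg _).trans (hB x hx)
  have hpoly : |∑ j ∈ range (n + 1), mellinD^[j] f x * s ^ j / j.factorial| ≤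
      (∑ j ∈ range (n + 1), |mellinD^[j] f x| / j.factorial) * (1 + |s| ^ n) := by
    rw [sum_mul]
    refine (abs_sum_le_sum_abs _ _).trans (sum_le_sum fun j hj => ?_)
    rw [abs_div, abs_mul, abs_pow, Nat.abs_cast, mul_div_right_comm]
    exact mul_le_mul_of_nonneg_left
      (pow_le_one_add_pow (abs_nonneg s) (Nat.lt_succ_iff.mp (mem_range.mp hj))) (by positivity)
  have hone : B ≤ B * (1 + |s| ^ n) := le_mul_of_one_le_right hB0 (by simp [pow_nonneg])
  calc |mellinTaylorRemainder f n x s|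
      ≤ |f (x * exp s)| + |∑ j ∈ range (n + 1), mellinD^[j] f x * s ^ j / j.factorial| :=
        abs_sub _ _
    _ ≤ _ := by rw [add_mul]; linarith [hB _ (mul_pos hx (exp_pos s))]

theorem exists_abs_le_mul_pow {R : ℝ → ℝ} {n : ℕ} {A : ℝ} (hglob : ∀ s, |R s| ≤ A * (1 + |s| ^ n))
    (hloc : R =O[𝓝 0] fun s => s ^ n) : ∃ K, ∀ s, |R s| ≤ K * |s| ^ n := by
  obtain ⟨C, hC⟩ := hloc.bound
  obtain ⟨δ, hδ, hball⟩ := Metric.eventually_nhds_iff_ball.mp hC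
  refine ⟨max C (A * ((δ ^ n)⁻¹ + 1)), fun s => ?_⟩
  rcases lt_or_ge |s| δ with hs | hs
  · have := hball s (by simpa using hs)
    simp only [norm_eq_abs, abs_pow] at this
    exact this.trans (mul_le_mul_of_nonneg_right (le_max_left _ _) (by positivity))
  · have hA : 0 ≤ A := nonneg_of_mul_nonneg_left ((abs_nonneg _).trans (hglob s)) (by positivity)
    have hδn : 1 ≤ |s| ^ n / δ ^ n := by
      rw [one_le_div (by positivity)]
      exact pow_le_pow_left₀ hδ.le hs n
    calc |R s| ≤ A * (1 + |s| ^ n) := hglob s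
      _ ≤ A * ((δ ^ n)⁻¹ + 1) * |s| ^ n := by
        rw [mul_assoc]
        refine mul_le_mul_of_nonneg_left ?_ hA
        rw [add_mul, one_mul, ← div_eq_inv_mul]
        linarith
      _ ≤ _ := mul_le_mul_of_nonneg_right (le_max_right _ _) (by positivity)

theorem summable_mul_pow_of_le {ι : Type*} {ψ t : ι → ℝ} {n j : ℕ} (hψ : Summable ψ)
    (hsum : Summable fun k => |ψ k| * |t k| ^ n) (hj : j ≤ n) :
    Summable fun k => ψ k * t k ^ j := by
  refine Summable.of_norm_bounded (hψ.abs.add hsum) fun k => ?_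
  rw [norm_mul, norm_pow, norm_eq_abs, norm_eq_abs, ← mul_one_add]
  exact mul_le_mul_of_nonneg_left (pow_le_one_add_pow (abs_nonneg _) hj) (abs_nonneg _)

theorem abs_mul_comp_div_le {R : ℝ → ℝ} {n : ℕ} {K w : ℝ} (hK : ∀ s, |R s| ≤ K * |s| ^ n)
    (hw : 0 < w) (a t : ℝ) : |a * R (t / w)| ≤ K / w ^ n * (|a| * |t| ^ n) := by
  calc |a * R (t / w)| ≤ |a| * (K * |t / w| ^ n) :=
        (abs_mul _ _).trans_le (mul_le_mul_of_nonneg_left (hK _) (abs_nonneg a))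
    _ = K / w ^ n * (|a| * |t| ^ n) := by
        rw [abs_div, abs_of_pos hw, div_pow]
        ring

theorem summable_mul_comp_div {ι : Type*} {ψ t : ι → ℝ} {R : ℝ → ℝ} {n : ℕ} {K w : ℝ}
    (hK : ∀ s, |R s| ≤ K * |s| ^ n) (hw : 0 < w) (hsum : Summable fun k => |ψ k| * |t k| ^ n) :
    Summable fun k => ψ k * R (t k / w) :=
  Summable.of_norm_bounded (hsum.mul_left _) fun _ => abs_mul_comp_div_le hK hw _ _

theorem abs_tsum_mul_comp_div_le {ι : Type*} {ψ t : ι → ℝ} {R : ℝ → ℝ} {n : ℕ} {K M ε δ w : ℝ}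
    (hw : 0 < w) (hsum : Summable fun k => |ψ k| * |t k| ^ n)
    (hM : ∑' k, |ψ k| * |t k| ^ n ≤ M)
    (htail : ∑' k : {k // δ * w < |t k|}, |ψ k| * |t k| ^ n ≤ ε)
    (hK : ∀ s, |R s| ≤ K * |s| ^ n) (hR : ∀ s, |s| ≤ δ → |R s| ≤ ε * |s| ^ n) :
    |∑' k, ψ k * R (t k / w)| ≤ (ε * M + K * ε) / w ^ n := by
  set a : ι → ℝ := fun k => |ψ k| * |t k| ^ n
  set T : Set ι := {k | δ * w < |t k|}
  have hK0 : 0 ≤ K := nonneg_of_mul_nonneg_left ((abs_nonneg _).trans (hK 1)) (by simp)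
  have hε0 : 0 ≤ ε := (tsum_nonneg fun _ => by positivity).trans htail
  have hbound : ∀ k, |ψ k * R (t k / w)| ≤ (ε * a k + K * T.indicator a k) / w ^ n := by
    intro k
    by_cases hk : k ∈ T
    · rw [Set.indicator_of_mem hk]
      calc |ψ k * R (t k / w)| ≤ K / w ^ n * a k := abs_mul_comp_div_le hK hw (ψ k) (t k)
        _ ≤ (ε * a k + K * a k) / w ^ n := by
            rw [add_div, div_mul_eq_mul_div]
            have : 0 ≤ ε * a k / w ^ n := by positivity
            linarith
    · rw [Set.indicator_of_notMem hk, mul_zero, add_zero]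
      have hsmall : |t k / w| ≤ δ := by
        rw [abs_div, abs_of_pos hw, div_le_iff₀ hw]
        simpa [T, mul_comm] using hk
      calc |ψ k * R (t k / w)| ≤ |ψ k| * (ε * |t k / w| ^ n) :=
            (abs_mul _ _).trans_le (mul_le_mul_of_nonneg_left (hR _ hsmall) (abs_nonneg _))
        _ = ε * a k / w ^ n := by
            rw [abs_div, abs_of_pos hw, div_pow]
            ring
  have hsumT : Summable (T.indicator a) := hsum.indicator T
  have htailT : ∑' k, T.indicator a k ≤ ε := by
    rw [← _root_.tsum_subtype]
    exact htail
  calc |∑' k, ψ k * R (t k / w)| ≤ ∑' k, |ψ k * R (t k / w)| :=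
        norm_tsum_le_tsum_norm (summable_mul_comp_div hK hw hsum).norm
    _ ≤ ∑' k, (ε * a k + K * T.indicator a k) / w ^ n :=
        Summable.tsum_le_tsum hbound (summable_mul_comp_div hK hw hsum).abs
          (((hsum.mul_left ε).add (hsumT.mul_left K)).div_const _)
    _ = (ε * ∑' k, a k + K * ∑' k, T.indicator a k) / w ^ n := by
        rw [tsum_div_const, Summable.tsum_add (hsum.mul_left ε) (hsumT.mul_left K), tsum_mul_left,
          tsum_mul_left]
    _ ≤ (ε * M + K * ε) / w ^ n := by gcongr

theorem isLittleO_tsum_kernel_mul_remainder {φ R u : ℝ → ℝ} {n : ℕ} {K : ℝ} (hu : ∀ w, 0 < u w)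
    (hsum : ∀ u : ℝ, 0 < u →
      Summable fun k : ℤ => |φ (exp (-k) * u)| * |(k : ℝ) - log u| ^ n)
    (hMn : ∃ M : ℝ, ∀ u : ℝ, 0 < u →
      ∑' k : ℤ, |φ (exp (-k) * u)| * |(k : ℝ) - log u| ^ n ≤ M)
    (htail : ∀ ε > (0:ℝ), ∃ r₀ : ℝ, ∀ r ≥ r₀, ∀ u : ℝ, 0 < u →
      ∑' k : {k : ℤ // r < |(k : ℝ) - log u|},
        |φ (exp (-(k:ℤ)) * u)| * |((k:ℤ) : ℝ) - log u| ^ n < ε)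
    (hRo : R =o[𝓝 0] fun s => s ^ n) (hK : ∀ s, |R s| ≤ K * |s| ^ n) :
    (fun w => ∑' k : ℤ, φ (exp (-k) * u w) * R ((k - log (u w)) / w)) =o[atTop]
      fun w => (w ^ n)⁻¹ := by
  obtain ⟨M, hM⟩ := hMn
  have hK0 : 0 ≤ K := nonneg_of_mul_nonneg_left ((abs_nonneg _).trans (hK 1)) (by simp)
  have hM0 : 0 ≤ M := (tsum_nonneg fun _ => by positivity).trans (hM 1 one_pos)
  rw [isLittleO_iff]
  intro c hc
  set ε := c / (M + K + 1)
  have hε : 0 < ε := by positivity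
  obtain ⟨δ, hδ, hRδ⟩ := Metric.nhds_basis_closedBall.eventually_iff.mp (isLittleO_iff.mp hRo hε)
  obtain ⟨r₀, hr₀⟩ := htail ε hε
  filter_upwards [eventually_gt_atTop 0, eventually_ge_atTop (r₀ / δ)] with w hw hwr
  have hr : r₀ ≤ δ * w := by rwa [div_le_iff₀ hδ, mul_comm] at hwr
  have hest := abs_tsum_mul_comp_div_le hw (hsum _ (hu w)) (hM _ (hu w))
    (hr₀ (δ * w) hr _ (hu w)).le hK fun s hs => by simpa [abs_pow] using hRδ (by simpa using hs)
  have hεc : ε * M + K * ε ≤ c := by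
    have : ε * (M + K + 1) = c := div_mul_cancel₀ c (by positivity)
    nlinarith
  rw [norm_inv, norm_pow, norm_eq_abs, norm_eq_abs, abs_of_pos hw, ← div_eq_mul_inv]
  exact hest.trans (div_le_div_of_nonneg_right hεc (by positivity))

theorem expSampling_eq_sum_add_tsum {φ f : ℝ → ℝ} {m : ℕ → ℝ} {n : ℕ} {x w : ℝ} (hx : 0 < x)
    (hw : w ≠ 0)
    (hmom : ∀ j ≤ n, HasSum (fun k : ℤ => φ (exp (-k) * x ^ w) * ((k : ℝ) - log (x ^ w)) ^ j) (m j))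
    (hR : Summable fun k : ℤ =>
      φ (exp (-k) * x ^ w) * mellinTaylorRemainder f n x ((k - log (x ^ w)) / w)) :
    expSampling φ f w x = ∑ j ∈ range (n + 1), mellinD^[j] f x / j.factorial * (m j / w ^ j) +
      ∑' k : ℤ, φ (exp (-k) * x ^ w) * mellinTaylorRemainder f n x ((k - log (x ^ w)) / w) := by
  have hpoly := hasSum_sum fun j (hj : j ∈ range (n + 1)) =>
    ((hmom j (by simpa [Nat.lt_succ_iff] using hj)).div_const (w ^ j)).mul_left
      (mellinD^[j] f x / j.factorial)
  have hxw : ∀ k : ℤ, x * exp ((k - log (x ^ w)) / w) = exp (k / w) := fun k => by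
    rw [log_rpow hx, sub_div, mul_div_cancel_left₀ _ hw, exp_sub, exp_log hx,
      mul_div_cancel₀ _ hx.ne']
  refine Eq.trans (tsum_congr fun k => ?_) (hpoly.add hR.hasSum).tsum_eq
  rw [mellinTaylorRemainder, hxw, mul_sub, mul_sum]
  simp only [div_pow]
  ring_nf

theorem voronovskaja_general
    (φ f : ℝ → ℝ) (n : ℕ) (hn : 1 ≤ n) (m : ℕ → ℝ)
    (hpart : ∀ u : ℝ, 0 < u → ∑' k : ℤ, φ (Real.exp (-k) * u) = 1)
    (hsum : ∀ u : ℝ, 0 < u →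
      Summable fun k : ℤ => |φ (Real.exp (-k) * u)| * |(k : ℝ) - Real.log u| ^ n)
    (hmom : ∀ j ≤ n, ∀ x : ℝ, 0 < x →
      ∑' k : ℤ, φ (Real.exp (-k) * x) * ((k : ℝ) - Real.log x) ^ j = m j)
    (hMn : ∃ M : ℝ, ∀ u : ℝ, 0 < u →
      ∑' k : ℤ, |φ (Real.exp (-k) * u)| * |(k : ℝ) - Real.log u| ^ n ≤ M)
    (htail : ∀ ε > (0:ℝ), ∃ r₀ : ℝ, ∀ r ≥ r₀, ∀ u : ℝ, 0 < u →
      ∑' k : {k : ℤ // r < |(k : ℝ) - Real.log u|},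
        |φ (Real.exp (-(k:ℤ)) * u)| * |((k:ℤ) : ℝ) - Real.log u| ^ n < ε)
    (hfbd : ∃ B : ℝ, ∀ x : ℝ, 0 < x → |f x| ≤ B)
    (x : ℝ) (hx : 0 < x) (hf : LocallyCn n f x) :
    (fun w : ℝ => expSampling φ f w x - f x -
        ∑ j ∈ Finset.Icc 1 n, mellinD^[j] f x / (Nat.factorial j) * (m j / w ^ j))
      =o[atTop] fun w : ℝ => (w ^ n)⁻¹ := by
  obtain ⟨n, rfl⟩ := Nat.exists_eq_add_of_le' hn
  obtain ⟨B, hB⟩ := hfbd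
  have hRo := isLittleO_mellinTaylorRemainder hx hf
  obtain ⟨K, hK⟩ := exists_abs_le_mul_pow (abs_mellinTaylorRemainder_le hB hx (n + 1)) hRo.isBigO
  have hkernel : ∀ u : ℝ, 0 < u → Summable fun k : ℤ => φ (exp (-k) * u) := fun u hu => by
    by_contra h
    simpa [tsum_eq_zero_of_not_summable h] using hpart u hu
  have hm0 : m 0 = 1 := by simpa [hpart x hx] using (hmom 0 (Nat.zero_le _) x hx).symm
  refine (isLittleO_tsum_kernel_mul_remainder (fun w => rpow_pos_of_pos hx w) hsum hMn htail hRo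
    hK).congr' ?_ EventuallyEq.rfl
  filter_upwards [eventually_gt_atTop 0] with w hw
  have hu : 0 < x ^ w := rpow_pos_of_pos hx w
  have hmoment := fun j (hj : j ≤ n + 1) =>
    (summable_mul_pow_of_le (hkernel _ hu) (hsum _ hu) hj).hasSum_iff.mpr (hmom j hj _ hu)
  rw [expSampling_eq_sum_add_tsum hx hw.ne' hmoment (summable_mul_comp_div hK hw (hsum _ hu)),
    range_eq_Ico, sum_eq_sum_Ico_succ_bot (Nat.succ_pos _), zero_add, Nat.succ_eq_add_one,
    Finset.Ico_add_one_right_eq_Icc, hm0]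
  simp only [Function.iterate_zero, id, Nat.factorial_zero, Nat.cast_one, pow_zero, div_one,
    mul_one]
  ring

/-- Voronovskaja-type asymptotic formula for the generalized exponential sampling series. -/
theorem voronovskaja
    (φ f : ℝ → ℝ) (n : ℕ) (hn : 1 ≤ n) (m : ℕ → ℝ)
    (hφcont : ContinuousOn φ (Set.Ioi (0:ℝ)))
    (hpart : ∀ u : ℝ, 0 < u → ∑' k : ℤ, φ (Real.exp (-k) * u) = 1)
    (hsum : ∀ u : ℝ, 0 < u →
      Summable fun k : ℤ => |φ (Real.exp (-k) * u)| * |(k : ℝ) - Real.log u| ^ n)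
    (hmom : ∀ j ≤ n, ∀ x : ℝ, 0 < x →
      ∑' k : ℤ, φ (Real.exp (-k) * x) * ((k : ℝ) - Real.log x) ^ j = m j)
    (hMn : ∃ M : ℝ, ∀ u : ℝ, 0 < u →
      ∑' k : ℤ, |φ (Real.exp (-k) * u)| * |(k : ℝ) - Real.log u| ^ n ≤ M)
    (htail : ∀ ε > (0:ℝ), ∃ r₀ : ℝ, ∀ r ≥ r₀, ∀ u : ℝ, 0 < u →
      ∑' k : {k : ℤ // r < |(k : ℝ) - Real.log u|},
        |φ (Real.exp (-(k:ℤ)) * u)| * |((k:ℤ) : ℝ) - Real.log u| ^ n < ε)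
    (hfbd : ∃ B : ℝ, ∀ x : ℝ, 0 < x → |f x| ≤ B)
    (hfcont : ContinuousOn f (Set.Ioi (0:ℝ)))
    (x : ℝ) (hx : 0 < x) (hf : LocallyCn n f x) :
    (fun w : ℝ => expSampling φ f w x - f x -
        ∑ j ∈ Finset.Icc 1 n, mellinD^[j] f x / (Nat.factorial j) * (m j / w ^ j))
      =o[atTop] fun w : ℝ => (w ^ n)⁻¹ :=
  voronovskaja_general φ f n hn m hpart hsum hmom hMn htail hfbd x hx hf
end

section
/- Under the hypotheses of the Voronovskaja theorem with n such that m_j(φ) = 0 for 1 ≤ j ≤ n−1 and m_n(φ) ≠ 0 possibly, lim_{w→+∞} w^n [(S_w^φ f)(x) − f(x)] = (Θ^n f)(x) m_n(φ)/n! for f of class C^{(n)} locally at x. -/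
open Real Filter Asymptotics

/-!
With `F = f ∘ exp` and `L = log x`, the substitution `x = eᵗ` turns `Θ` into `d/dt`, so
`F⁽ⁿ⁾(L) = (Θⁿ f)(x)`, and `(S_w^φ f)(x) = ∑ₖ F(k/w) φ(e⁻ᵏ xʷ)` is an average of `F` over the
points `k/w`, whose `j`-th moment about `L` is `m_j / wʲ`. Expanding `F` around `L` to order `n`
(Peano remainder), the constant term reproduces `f(x)`, the moments of orders `1, …, n-1` vanish,
and the term of order `n` contributes `F⁽ⁿ⁾(L) m_n / (n! wⁿ)`. The remainder is `o(|s - L|ⁿ)` near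
`L` and `O(1 + |s - L|ⁿ)` everywhere since `f` is bounded; after multiplication by `wⁿ` the near
part is controlled by the uniform bound on the absolute moments of order `n`, and the far part by
their uniformly vanishing tails.
-/

open Topology
open scoped ContDiff

/-- `LocallyCn (p + 1)` in recursive form, suited to induction on `p`. -/
def IterateDifferentiableAt : ℕ → (ℝ → ℝ) → ℝ → Prop
  | 0, g, x => DifferentiableAt ℝ g x
  | p + 1, g, x => (∀ᶠ y in 𝓝 x, DifferentiableAt ℝ g y) ∧ IterateDifferentiableAt p (deriv g) x

namespace IterateDifferentiableAt

theorem of_succ {p : ℕ} {g : ℝ → ℝ} {x : ℝ} (hg : IterateDifferentiableAt (p + 1) g x) :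
    IterateDifferentiableAt p g x := by
  induction p generalizing g with
  | zero => exact hg.1.self_of_nhds
  | succ p ih => exact ⟨hg.1, ih hg.2⟩

theorem congr {p : ℕ} {g g' : ℝ → ℝ} {x : ℝ} (hg : IterateDifferentiableAt p g x)
    (hgg' : g =ᶠ[𝓝 x] g') : IterateDifferentiableAt p g' x := by
  induction p generalizing g g' with
  | zero => exact hg.congr_of_eventuallyEq hgg'.symm
  | succ p ih =>
    refine ⟨?_, ih hg.2 hgg'.deriv⟩
    filter_upwards [hgg'.eventuallyEq_nhds, hg.1] with y hy hgy
    exact hgy.congr_of_eventuallyEq hy.symm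

theorem add {p : ℕ} {g h : ℝ → ℝ} {x : ℝ} (hg : IterateDifferentiableAt p g x)
    (hh : IterateDifferentiableAt p h x) : IterateDifferentiableAt p (fun y => g y + h y) x := by
  induction p generalizing g h with
  | zero => exact DifferentiableAt.add hg hh
  | succ p ih =>
    refine ⟨?_, (ih hg.2 hh.2).congr ?_⟩
    · filter_upwards [hg.1, hh.1] with y hgy hhy
      exact hgy.add hhy
    · filter_upwards [hg.1, hh.1] with y hgy hhy
      exact (deriv_add hgy hhy).symm

theorem contDiff_mul {p : ℕ} {g h : ℝ → ℝ} {x : ℝ} (hh : ContDiff ℝ ∞ h)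
    (hg : IterateDifferentiableAt p g x) : IterateDifferentiableAt p (fun y => h y * g y) x := by
  have hdh : ∀ y, DifferentiableAt ℝ h y := fun y => hh.differentiable (by simp) y
  induction p generalizing g h with
  | zero => exact (hdh x).mul hg
  | succ p ih =>
    refine ⟨hg.1.mono fun y hgy => (hdh y).mul hgy, ?_⟩
    have hderiv : IterateDifferentiableAt p (fun y => deriv h y * g y + h y * deriv g y) x :=
      (ih (hh.iterate_deriv 1) hg.of_succ fun y => ?_).add (ih hh hg.2 hdh)
    · refine hderiv.congr ?_
      filter_upwards [hg.1] with y hgy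
      exact (deriv_mul (hdh y) hgy).symm
    · exact (hh.iterate_deriv 1).differentiable (by simp) y

theorem comp_contDiff {p : ℕ} {f h : ℝ → ℝ} {t : ℝ} (hh : ContDiff ℝ ∞ h)
    (hf : IterateDifferentiableAt p f (h t)) : IterateDifferentiableAt p (fun s => f (h s)) t := by
  have hdh : ∀ s, DifferentiableAt ℝ h s := fun s => hh.differentiable (by simp) s
  induction p generalizing f t with
  | zero => exact hf.comp t (hdh t)
  | succ p ih =>
    have hnear : ∀ᶠ s in 𝓝 t, DifferentiableAt ℝ f (h s) := (hdh t).continuousAt.eventually hf.1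
    refine ⟨hnear.mono fun s hfs => hfs.comp s (hdh s), ?_⟩
    refine (contDiff_mul (hh.iterate_deriv 1) (ih hf.2)).congr ?_
    filter_upwards [hnear] with s hfs
    exact (mul_comm _ _).trans (deriv_comp s hfs (hdh s)).symm

theorem of_iterate_deriv {p : ℕ} {f : ℝ → ℝ} {x : ℝ}
    (hlow : ∀ m < p, ∀ᶠ y in 𝓝 x, DifferentiableAt ℝ (deriv^[m] f) y)
    (htop : DifferentiableAt ℝ (deriv^[p] f) x) : IterateDifferentiableAt p f x := by
  induction p generalizing f with
  | zero => exact htop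
  | succ p ih =>
    exact ⟨hlow 0 p.succ_pos, ih (fun m hm => hlow (m + 1) (by omega)) htop⟩

end IterateDifferentiableAt

theorem LocallyCn.iterateDifferentiableAt {n : ℕ} {f : ℝ → ℝ} {x : ℝ} (hf : LocallyCn n f x) :
    IterateDifferentiableAt (n - 1) f x := by
  simp only [LocallyCn, iteratedDeriv_eq_iterate] at hf
  exact .of_iterate_deriv hf.1 hf.2

noncomputable def taylorSum (F : ℝ → ℝ) (q : ℕ) (L s : ℝ) : ℝ :=
  ∑ j ∈ Finset.range (q + 1), deriv^[j] F L / j.factorial * (s - L) ^ j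

theorem taylorSum_self (F : ℝ → ℝ) (q : ℕ) (L : ℝ) : taylorSum F q L L = F L := by
  rw [taylorSum, Finset.sum_range_succ']
  simp

theorem hasDerivAt_taylorSum_succ (F : ℝ → ℝ) (q : ℕ) (L t : ℝ) :
    HasDerivAt (taylorSum F (q + 1) L) (taylorSum (deriv F) q L t) t := by
  have hterm : ∀ j ∈ Finset.range (q + 2), HasDerivAt
      (fun s => deriv^[j] F L / j.factorial * (s - L) ^ j)
      (deriv^[j] F L / j.factorial * (j * (t - L) ^ (j - 1))) t := fun j _ => by
    simpa using (((hasDerivAt_id t).sub_const L).fun_pow j).const_mul (deriv^[j] F L / j.factorial)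
  refine (HasDerivAt.fun_sum hterm).congr_deriv ?_
  rw [Finset.sum_range_succ' _ (q + 1), taylorSum]
  simp only [CharP.cast_eq_zero, zero_mul, mul_zero, add_zero]
  refine Finset.sum_congr rfl fun j _ => ?_
  rw [← Function.iterate_succ_apply, Nat.add_sub_cancel, Nat.factorial_succ]
  push_cast
  field_simp

theorem isLittleO_pow_succ_of_eventually_hasDerivAt {f f' : ℝ → ℝ} {x₀ : ℝ} {n : ℕ}
    (hff' : ∀ᶠ x in 𝓝 x₀, HasDerivAt f (f' x) x) (hf' : f' =o[𝓝 x₀] fun x => (x - x₀) ^ n) :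
    (fun x => f x - f x₀) =o[𝓝 x₀] fun x => (x - x₀) ^ (n + 1) := by
  obtain ⟨r, hr, hball⟩ := Metric.eventually_nhds_iff_ball.mp hff'
  have hnhds : 𝓝[Metric.ball x₀ r] x₀ = 𝓝 x₀ :=
    Metric.isOpen_ball.nhdsWithin_eq (Metric.mem_ball_self hr)
  rw [← hnhds] at hf' ⊢
  exact (convex_ball x₀ r).isLittleO_pow_succ_real (Metric.mem_ball_self hr)
    (fun x hx => (hball x hx).hasDerivWithinAt) hf'

theorem IterateDifferentiableAt.isLittleO_sub_taylorSum {p : ℕ} {F : ℝ → ℝ} {L : ℝ}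
    (hF : IterateDifferentiableAt p F L) :
    (fun s => F s - taylorSum F (p + 1) L s) =o[𝓝 L] fun s => (s - L) ^ (p + 1) := by
  induction p generalizing F with
  | zero =>
    simp only [zero_add, pow_one]
    refine (hasDerivAt_iff_isLittleO.mp hF.hasDerivAt).congr_left fun s => ?_
    simp [taylorSum, Finset.sum_range_succ]
    ring
  | succ p ih =>
    have hderiv : ∀ᶠ s in 𝓝 L, HasDerivAt (fun s => F s - taylorSum F (p + 2) L s)
        (deriv F s - taylorSum (deriv F) (p + 1) L s) s := by
      filter_upwards [hF.1] with s hFs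
      exact hFs.hasDerivAt.sub (hasDerivAt_taylorSum_succ F (p + 1) L s)
    simpa [taylorSum_self] using isLittleO_pow_succ_of_eventually_hasDerivAt hderiv (ih hF.2)

theorem pow_le_one_add_pow_s5 {a : ℝ} (ha : 0 ≤ a) {j q : ℕ} (hjq : j ≤ q) : a ^ j ≤ 1 + a ^ q := by
  rcases le_total a 1 with ha1 | ha1
  · linarith [pow_le_one₀ ha ha1 (n := j), pow_nonneg ha q]
  · linarith [pow_le_pow_right₀ ha1 hjq]

theorem abs_sub_taylorSum_le {F : ℝ → ℝ} {B : ℝ} (hF : ∀ s, |F s| ≤ B) (q : ℕ) (L s : ℝ) :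
    |F s - taylorSum F q L s| ≤
      (B + ∑ j ∈ Finset.range (q + 1), |deriv^[j] F L / j.factorial|) * (1 + |s - L| ^ q) := by
  have hB : 0 ≤ B := (abs_nonneg _).trans (hF s)
  have hpoly : |taylorSum F q L s| ≤
      ∑ j ∈ Finset.range (q + 1), |deriv^[j] F L / j.factorial| * (1 + |s - L| ^ q) := by
    refine (Finset.abs_sum_le_sum_abs _ _).trans (Finset.sum_le_sum fun j hj => ?_)
    rw [abs_mul, abs_pow]
    gcongr
    exact pow_le_one_add_pow_s5 (abs_nonneg _) (Finset.mem_range_succ_iff.mp hj)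
  calc |F s - taylorSum F q L s| ≤ |F s| + |taylorSum F q L s| := abs_sub _ _
    _ ≤ B * (1 + |s - L| ^ q) +
        ∑ j ∈ Finset.range (q + 1), |deriv^[j] F L / j.factorial| * (1 + |s - L| ^ q) := by
      gcongr
      exact (hF s).trans (le_mul_of_one_le_right hB (by simp))
    _ = _ := by rw [← Finset.sum_mul, add_mul]

theorem deriv_comp_exp (g : ℝ → ℝ) (t : ℝ) :
    deriv (fun s => g (exp s)) t = exp t * deriv g (exp t) := by
  by_cases hg : DifferentiableAt ℝ g (exp t)
  · have h := deriv_comp t hg differentiableAt_exp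
    rw [Real.deriv_exp, mul_comm] at h
    exact h
  · have hcomp : ¬ DifferentiableAt ℝ (fun s => g (exp s)) t := fun h => hg <| by
      have hlog : DifferentiableAt ℝ (fun y => g (exp (log y))) (exp t) :=
        ((log_exp t).symm ▸ h).comp (exp t) (differentiableAt_log (exp_pos t).ne')
      refine hlog.congr_of_eventuallyEq ?_
      filter_upwards [eventually_gt_nhds (exp_pos t)] with y hy
      rw [exp_log hy]
    rw [deriv_zero_of_not_differentiableAt hcomp, deriv_zero_of_not_differentiableAt hg, mul_zero]

theorem iterate_deriv_comp_exp (g : ℝ → ℝ) (j : ℕ) :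
    deriv^[j] (fun s => g (exp s)) = fun s => mellinD^[j] g (exp s) := by
  induction j with
  | zero => rfl
  | succ j ih =>
    rw [Function.iterate_succ_apply', Function.iterate_succ_apply', ih]
    exact funext (deriv_comp_exp _)

theorem eventually_one_le_abs_intCast_sub (t : ℝ) : ∀ᶠ k : ℤ in cofinite, 1 ≤ |(k : ℝ) - t| := by
  have hnorm : Tendsto (fun k : ℤ => ‖(k : ℝ)‖) cofinite atTop :=
    tendsto_norm_cocompact_atTop.comp Int.tendsto_coe_cofinite
  filter_upwards [hnorm.eventually_ge_atTop (1 + |t|)] with k hk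
  rw [Real.norm_eq_abs] at hk
  linarith [abs_sub_abs_le_abs_sub (k : ℝ) t]

theorem summable_abs_mul_abs_sub_pow_of_le {a : ℤ → ℝ} {t : ℝ} {c n : ℕ}
    (h : Summable fun k : ℤ => |a k| * |(k : ℝ) - t| ^ n) (hcn : c ≤ n) :
    Summable fun k : ℤ => |a k| * |(k : ℝ) - t| ^ c := by
  refine h.of_norm_bounded_eventually ?_
  filter_upwards [eventually_one_le_abs_intCast_sub t] with k hk
  rw [Real.norm_eq_abs, abs_of_nonneg (by positivity)]
  gcongr

theorem intCast_div_sub_log (k : ℤ) {w x : ℝ} (hw : w ≠ 0) (hx : 0 < x) :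
    (k : ℝ) / w - log x = ((k : ℝ) - log (x ^ w)) / w := by
  rw [log_rpow hx]
  field_simp

section Kernel

variable {φ : ℝ → ℝ} {n : ℕ} {m : ℕ → ℝ} {x w : ℝ}

theorem summable_div_sub_log_pow_mul_kernel
    (hsum : ∀ u : ℝ, 0 < u →
      Summable fun k : ℤ => |φ (exp (-k) * u)| * |(k : ℝ) - log u| ^ n)
    (hx : 0 < x) (hw : w ≠ 0) {j : ℕ} (hj : j ≤ n) :
    Summable fun k : ℤ => ((k : ℝ) / w - log x) ^ j * φ (exp (-k) * x ^ w) := by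
  refine ((summable_abs_mul_abs_sub_pow_of_le (hsum _ (rpow_pos_of_pos hx w)) hj).div_const
    (|w| ^ j)).of_norm_bounded fun k => le_of_eq ?_
  rw [intCast_div_sub_log k hw hx, norm_mul, norm_pow, Real.norm_eq_abs, Real.norm_eq_abs,
    abs_div, div_pow]
  ring

theorem tsum_div_sub_log_pow_mul_kernel
    (hmom : ∀ j ≤ n, ∀ u : ℝ, 0 < u →
      ∑' k : ℤ, φ (exp (-k) * u) * ((k : ℝ) - log u) ^ j = m j)
    (hx : 0 < x) (hw : w ≠ 0) {j : ℕ} (hj : j ≤ n) :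
    ∑' k : ℤ, ((k : ℝ) / w - log x) ^ j * φ (exp (-k) * x ^ w) = m j / w ^ j := by
  simp_rw [intCast_div_sub_log _ hw hx, div_pow, div_mul_eq_mul_div, tsum_div_const,
    mul_comm _ (φ _)]
  rw [hmom j hj _ (rpow_pos_of_pos hx w)]

theorem tsum_polynomial_mul_kernel (hn : 1 ≤ n)
    (hpart : ∀ u : ℝ, 0 < u → ∑' k : ℤ, φ (exp (-k) * u) = 1)
    (hsum : ∀ u : ℝ, 0 < u →
      Summable fun k : ℤ => |φ (exp (-k) * u)| * |(k : ℝ) - log u| ^ n)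
    (hmom : ∀ j ≤ n, ∀ u : ℝ, 0 < u →
      ∑' k : ℤ, φ (exp (-k) * u) * ((k : ℝ) - log u) ^ j = m j)
    (hm0 : ∀ j, 1 ≤ j → j ≤ n - 1 → m j = 0) (c : ℕ → ℝ) (hx : 0 < x) (hw : w ≠ 0) :
    ∑' k : ℤ, (∑ j ∈ Finset.range (n + 1), c j * ((k : ℝ) / w - log x) ^ j) *
        φ (exp (-k) * x ^ w) = c 0 + c n * m n / w ^ n := by
  have hm_zero : m 0 = 1 := by
    simpa [← hmom 0 n.zero_le 1 one_pos] using hpart 1 one_pos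
  simp_rw [Finset.sum_mul, mul_assoc]
  rw [Summable.tsum_finsetSum fun j hj => (summable_div_sub_log_pow_mul_kernel hsum hx hw
      (Finset.mem_range_succ_iff.mp hj)).mul_left (c j),
    Finset.sum_congr rfl fun j hj => by
      rw [tsum_mul_left,
        tsum_div_sub_log_pow_mul_kernel hmom hx hw (Finset.mem_range_succ_iff.mp hj)],
    Finset.sum_range_succ, Finset.sum_eq_single_of_mem 0 (Finset.mem_range.mpr hn)]
  · simp [hm_zero, mul_div_assoc]
  · intro j hj hj0
    rw [hm0 j (Nat.one_le_iff_ne_zero.mpr hj0) (by have := Finset.mem_range.mp hj; omega)]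
    simp

theorem pow_mul_tsum_mul_kernel_sub (hn : 1 ≤ n)
    (hpart : ∀ u : ℝ, 0 < u → ∑' k : ℤ, φ (exp (-k) * u) = 1)
    (hsum : ∀ u : ℝ, 0 < u →
      Summable fun k : ℤ => |φ (exp (-k) * u)| * |(k : ℝ) - log u| ^ n)
    (hmom : ∀ j ≤ n, ∀ u : ℝ, 0 < u →
      ∑' k : ℤ, φ (exp (-k) * u) * ((k : ℝ) - log u) ^ j = m j)
    (hm0 : ∀ j, 1 ≤ j → j ≤ n - 1 → m j = 0) {G : ℝ → ℝ} {B : ℝ} (hG : ∀ s, |G s| ≤ B)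
    (c : ℕ → ℝ) (hx : 0 < x) (hw : w ≠ 0) :
    w ^ n * (∑' k : ℤ, G (k / w) * φ (exp (-k) * x ^ w) - c 0) = c n * m n +
      w ^ n * ∑' k : ℤ, (G (k / w) - ∑ j ∈ Finset.range (n + 1), c j * ((k : ℝ) / w - log x) ^ j) *
        φ (exp (-k) * x ^ w) := by
  have hkernel : Summable fun k : ℤ => |φ (exp (-k) * x ^ w)| := by
    simpa using summable_abs_mul_abs_sub_pow_of_le (hsum _ (rpow_pos_of_pos hx w)) n.zero_le
  have hGsum : Summable fun k : ℤ => G (k / w) * φ (exp (-k) * x ^ w) :=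
    (hkernel.mul_left B).of_norm_bounded fun k => by
      rw [norm_mul, Real.norm_eq_abs, Real.norm_eq_abs]
      exact mul_le_mul_of_nonneg_right (hG _) (abs_nonneg _)
  have hpoly : Summable fun k : ℤ =>
      (∑ j ∈ Finset.range (n + 1), c j * ((k : ℝ) / w - log x) ^ j) * φ (exp (-k) * x ^ w) := by
    simp_rw [Finset.sum_mul, mul_assoc]
    exact summable_sum fun j hj => (summable_div_sub_log_pow_mul_kernel hsum hx hw
      (Finset.mem_range_succ_iff.mp hj)).mul_left (c j)
  simp_rw [sub_mul]
  rw [hGsum.tsum_sub hpoly, tsum_polynomial_mul_kernel hn hpart hsum hmom hm0 c hx hw]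
  generalize ∑' k : ℤ, G (k / w) * φ (exp (-k) * x ^ w) = A
  field_simp
  ring

end Kernel

theorem abs_tsum_le_of_abs_le_piecewise {ι : Type*} {g a : ι → ℝ} (S : Set ι) {δ C : ℝ}
    (ha : Summable a) (ha0 : ∀ i, 0 ≤ a i) (hδ : 0 ≤ δ)
    (hout : ∀ i ∉ S, |g i| ≤ δ * a i) (hin : ∀ i ∈ S, |g i| ≤ C * a i) :
    |∑' i, g i| ≤ δ * ∑' i, a i + C * ∑' i : S, a i := by
  have hbound : ∀ i, ‖g i‖ ≤ δ * a i + C * S.indicator a i := fun i => by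
    by_cases hi : i ∈ S
    · rw [Set.indicator_of_mem hi, Real.norm_eq_abs]
      linarith [hin i hi, mul_nonneg hδ (ha0 i)]
    · rw [Set.indicator_of_notMem hi, mul_zero, add_zero, Real.norm_eq_abs]
      exact hout i hi
  have hsum : Summable fun i => δ * a i + C * S.indicator a i :=
    (ha.mul_left δ).add ((ha.indicator S).mul_left C)
  calc |∑' i, g i| ≤ ∑' i, ‖g i‖ :=
        norm_tsum_le_tsum_norm (hsum.of_nonneg_of_le (fun i => norm_nonneg _) hbound)
    _ ≤ ∑' i, (δ * a i + C * S.indicator a i) :=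
        Summable.tsum_le_tsum hbound (hsum.of_nonneg_of_le (fun i => norm_nonneg _) hbound) hsum
    _ = δ * ∑' i, a i + C * ∑' i : S, a i := by
        rw [(ha.mul_left δ).tsum_add ((ha.indicator S).mul_left C), tsum_mul_left, tsum_mul_left,
          tsum_subtype]

theorem abs_intCast_div_sub (k : ℤ) {w L : ℝ} (hw : 0 < w) :
    |(k : ℝ) / w - L| = |(k : ℝ) - w * L| / w := by
  rw [show (k : ℝ) / w - L = ((k : ℝ) - w * L) / w by field_simp, abs_div, abs_of_pos hw]

theorem abs_pow_mul_tsum_le_of_local_bounds {E : ℝ → ℝ} {a : ℤ → ℝ} {n : ℕ} {L w γ δ C : ℝ}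
    (hw : 0 < w) (hδ : 0 ≤ δ) (ha : Summable fun k : ℤ => |a k| * |(k : ℝ) - w * L| ^ n)
    (hnear : ∀ s, |s - L| ≤ γ → |E s| ≤ δ * |s - L| ^ n)
    (hfar : ∀ s, γ < |s - L| → |E s| ≤ C * |s - L| ^ n) :
    |w ^ n * ∑' k : ℤ, E (k / w) * a k| ≤ δ * ∑' k : ℤ, |a k| * |(k : ℝ) - w * L| ^ n +
      C * ∑' k : {k : ℤ // γ * w < |(k : ℝ) - w * L|}, |a k| * |(k : ℝ) - w * L| ^ n := by
  have hscale : ∀ k : ℤ, ∀ D : ℝ, |E (k / w)| ≤ D * |(k : ℝ) / w - L| ^ n →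
      |w ^ n * (E (k / w) * a k)| ≤ D * (|a k| * |(k : ℝ) - w * L| ^ n) := fun k D hk => by
    rw [abs_intCast_div_sub k hw, div_pow] at hk
    rw [abs_mul, abs_mul, abs_of_pos (pow_pos hw n)]
    calc w ^ n * (|E (k / w)| * |a k|) ≤ w ^ n * (D * (|(k : ℝ) - w * L| ^ n / w ^ n) * |a k|) := by
          gcongr
      _ = D * (|a k| * |(k : ℝ) - w * L| ^ n) := by field_simp
  rw [← tsum_mul_left]
  refine abs_tsum_le_of_abs_le_piecewise {k : ℤ | γ * w < |(k : ℝ) - w * L|} ha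
    (fun k => by positivity) hδ (fun k hk => hscale k δ (hnear _ ?_))
    (fun k hk => hscale k C (hfar _ ?_))
  · rw [abs_intCast_div_sub k hw, div_le_iff₀ hw]
    exact le_of_not_gt hk
  · rw [abs_intCast_div_sub k hw, lt_div_iff₀ hw]
    exact hk

theorem mul_one_add_pow_le {C γ r : ℝ} {n : ℕ} (hC : 0 ≤ C) (hγ : 0 < γ) (hr : γ ≤ r) :
    C * (1 + r ^ n) ≤ C * ((γ ^ n)⁻¹ + 1) * r ^ n := by
  have h1 : 1 ≤ (γ ^ n)⁻¹ * r ^ n := by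
    rw [inv_mul_eq_div, one_le_div (pow_pos hγ n)]
    exact pow_le_pow_left₀ hγ.le hr n
  calc C * (1 + r ^ n) ≤ C * ((γ ^ n)⁻¹ * r ^ n + r ^ n) := by gcongr
    _ = C * ((γ ^ n)⁻¹ + 1) * r ^ n := by ring

theorem tendsto_pow_mul_tsum_remainder {φ E : ℝ → ℝ} {n : ℕ} {x : ℝ} (hx : 0 < x)
    (hsum : ∀ u : ℝ, 0 < u →
      Summable fun k : ℤ => |φ (exp (-k) * u)| * |(k : ℝ) - log u| ^ n)
    (hMn : ∃ M : ℝ, ∀ u : ℝ, 0 < u →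
      ∑' k : ℤ, |φ (exp (-k) * u)| * |(k : ℝ) - log u| ^ n ≤ M)
    (htail : ∀ ε > (0:ℝ), ∃ r₀ : ℝ, ∀ r ≥ r₀, ∀ u : ℝ, 0 < u →
      ∑' k : {k : ℤ // r < |(k : ℝ) - log u|},
        |φ (exp (-(k:ℤ)) * u)| * |((k:ℤ) : ℝ) - log u| ^ n < ε)
    (hE : E =o[𝓝 (log x)] fun s => (s - log x) ^ n)
    {C : ℝ} (hC : 0 ≤ C) (hgrowth : ∀ s, |E s| ≤ C * (1 + |s - log x| ^ n)) :
    Tendsto (fun w => w ^ n * ∑' k : ℤ, E (k / w) * φ (exp (-k) * x ^ w)) atTop (𝓝 0) := by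
  obtain ⟨M, hM⟩ := hMn
  have hM0 : 0 ≤ M := (tsum_nonneg fun k => by positivity).trans (hM 1 one_pos)
  rw [NormedAddGroup.tendsto_nhds_zero]
  intro ε hε
  set δ := ε / (2 * (M + 1))
  obtain ⟨γ₀, hγ₀, hnear⟩ := Metric.eventually_nhds_iff.mp (hE.def (by positivity : 0 < δ))
  set γ := γ₀ / 2
  set C' := C * ((γ ^ n)⁻¹ + 1)
  obtain ⟨r₀, hr₀⟩ := htail (ε / (2 * (C' + 1))) (by positivity)
  filter_upwards [eventually_gt_atTop 0, eventually_ge_atTop (r₀ / γ)] with w hw hwr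
  have hlog : log (x ^ w) = w * log x := log_rpow hx w
  have hxw : 0 < x ^ w := rpow_pos_of_pos hx w
  have hbound := abs_pow_mul_tsum_le_of_local_bounds (E := E) (γ := γ) (δ := δ) (C := C') hw
    (by positivity) (hlog ▸ hsum _ hxw)
    (fun s hs => by simpa [abs_pow] using hnear (lt_of_le_of_lt hs (by simp [γ, hγ₀])))
    (fun s hs => (hgrowth s).trans (mul_one_add_pow_le hC (by positivity) hs.le))
  have htail_w := hlog ▸ hr₀ (γ * w) ((div_le_iff₀ (by positivity)).mp hwr |>.trans_eq
    (mul_comm _ _)) _ hxw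
  rw [Real.norm_eq_abs]
  calc _ ≤ _ := hbound
    _ ≤ δ * M + C' * (ε / (2 * (C' + 1))) := by
      gcongr
      exact hlog ▸ hM _ hxw
    _ < ε / 2 + ε / 2 := by
      have hδM : ε / (2 * (M + 1)) * M < ε / 2 := by
        rw [div_mul_eq_mul_div, div_lt_div_iff₀ (by positivity) two_pos]
        nlinarith
      have hC'ε : C' * (ε / (2 * (C' + 1))) ≤ ε / 2 := by
        have hC' : 0 ≤ C' := by positivity
        rw [← mul_div_assoc, div_le_div_iff₀ (by positivity) two_pos]
        nlinarith
      exact add_lt_add_of_lt_of_le hδM hC'ε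
    _ = ε := add_halves ε

theorem voronovskaja_corollary_general
    (φ f : ℝ → ℝ) (n : ℕ) (hn : 1 ≤ n) (m : ℕ → ℝ)
    (hpart : ∀ u : ℝ, 0 < u → ∑' k : ℤ, φ (Real.exp (-k) * u) = 1)
    (hsum : ∀ u : ℝ, 0 < u →
      Summable fun k : ℤ => |φ (Real.exp (-k) * u)| * |(k : ℝ) - Real.log u| ^ n)
    (hmom : ∀ j ≤ n, ∀ x : ℝ, 0 < x →
      ∑' k : ℤ, φ (Real.exp (-k) * x) * ((k : ℝ) - Real.log x) ^ j = m j)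
    (hMn : ∃ M : ℝ, ∀ u : ℝ, 0 < u →
      ∑' k : ℤ, |φ (Real.exp (-k) * u)| * |(k : ℝ) - Real.log u| ^ n ≤ M)
    (htail : ∀ ε > (0:ℝ), ∃ r₀ : ℝ, ∀ r ≥ r₀, ∀ u : ℝ, 0 < u →
      ∑' k : {k : ℤ // r < |(k : ℝ) - Real.log u|},
        |φ (Real.exp (-(k:ℤ)) * u)| * |((k:ℤ) : ℝ) - Real.log u| ^ n < ε)
    (hm0 : ∀ j, 1 ≤ j → j ≤ n - 1 → m j = 0)
    (hfbd : ∃ B : ℝ, ∀ x : ℝ, 0 < x → |f x| ≤ B)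
    (x : ℝ) (hx : 0 < x) (hf : LocallyCn n f x) :
    Tendsto (fun w : ℝ => w ^ n * (expSampling φ f w x - f x)) atTop
      (nhds (mellinD^[n] f x / (Nat.factorial n) * m n)) := by
  obtain ⟨B, hB⟩ := hfbd
  set F : ℝ → ℝ := fun s => f (exp s)
  have hFbd : ∀ s, |F s| ≤ B := fun s => hB _ (exp_pos s)
  have hF : IterateDifferentiableAt (n - 1) F (log x) :=
    .comp_contDiff contDiff_exp ((exp_log hx).symm ▸ hf.iterateDifferentiableAt)
  have hTaylor := hF.isLittleO_sub_taylorSum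
  rw [Nat.sub_add_cancel hn] at hTaylor
  have hremainder := tendsto_pow_mul_tsum_remainder hx hsum hMn htail hTaylor
    (add_nonneg ((abs_nonneg _).trans (hB x hx)) (Finset.sum_nonneg fun j _ => abs_nonneg _))
    (abs_sub_taylorSum_le hFbd n (log x))
  have hDn : deriv^[n] F (log x) = mellinD^[n] f x := by
    simp only [F, iterate_deriv_comp_exp, exp_log hx]
  have hD0 : deriv^[0] F (log x) / (0).factorial = f x := by
    simp [F, exp_log hx]
  rw [← hDn, ← add_zero (_ * m n)]
  refine (hremainder.const_add _).congr' ?_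
  filter_upwards [eventually_gt_atTop 0] with w hw
  rw [← hD0]
  exact (pow_mul_tsum_mul_kernel_sub hn hpart hsum hmom hm0 hFbd
    (fun j => deriv^[j] F (log x) / j.factorial) hx hw.ne').symm

/-- Pointwise asymptotic formula when the intermediate moments vanish. -/
theorem voronovskaja_corollary
    (φ f : ℝ → ℝ) (n : ℕ) (hn : 1 ≤ n) (m : ℕ → ℝ)
    (hφcont : ContinuousOn φ (Set.Ioi (0:ℝ)))
    (hpart : ∀ u : ℝ, 0 < u → ∑' k : ℤ, φ (Real.exp (-k) * u) = 1)
    (hsum : ∀ u : ℝ, 0 < u →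
      Summable fun k : ℤ => |φ (Real.exp (-k) * u)| * |(k : ℝ) - Real.log u| ^ n)
    (hmom : ∀ j ≤ n, ∀ x : ℝ, 0 < x →
      ∑' k : ℤ, φ (Real.exp (-k) * x) * ((k : ℝ) - Real.log x) ^ j = m j)
    (hMn : ∃ M : ℝ, ∀ u : ℝ, 0 < u →
      ∑' k : ℤ, |φ (Real.exp (-k) * u)| * |(k : ℝ) - Real.log u| ^ n ≤ M)
    (htail : ∀ ε > (0:ℝ), ∃ r₀ : ℝ, ∀ r ≥ r₀, ∀ u : ℝ, 0 < u →
      ∑' k : {k : ℤ // r < |(k : ℝ) - Real.log u|},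
        |φ (Real.exp (-(k:ℤ)) * u)| * |((k:ℤ) : ℝ) - Real.log u| ^ n < ε)
    (hm0 : ∀ j, 1 ≤ j → j ≤ n - 1 → m j = 0)
    (hfbd : ∃ B : ℝ, ∀ x : ℝ, 0 < x → |f x| ≤ B)
    (hfcont : ContinuousOn f (Set.Ioi (0:ℝ)))
    (x : ℝ) (hx : 0 < x) (hf : LocallyCn n f x) :
    Tendsto (fun w : ℝ => w ^ n * (expSampling φ f w x - f x)) atTop
      (nhds (mellinD^[n] f x / (Nat.factorial n) * m n)) :=
  voronovskaja_corollary_general φ f n hn m hpart hsum hmom hMn htail hm0 hfbd x hx hf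
end

section
/- For the second-order Mellin spline B₂(x) = (1 − |log x|)₊, the first algebraic moment vanishes: m₁(B₂, x) := ∑_{k∈ℤ} B₂(e^{-k}x)(k − log x) = 0 for every x > 0, and hence for any f ∈ C(ℝ⁺) of class C^{(1)} locally at x, (S_w^{B₂} f)(x) − f(x) = o(w^{-1}) as w → +∞. -/
/-!
On the logarithmic scale `B₂` is the hat function `t ↦ (1 - |t|)₊`, so at `y = eᵗ` only the
nodes `k = ⌊t⌋` and `k = ⌊t⌋ + 1` contribute to a series `∑ₖ g k · B₂(e⁻ᵏ y)`, with the
barycentric weights `1 - fract t` and `fract t` of `t`; this reproduces affine functions of `k`,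
which is `m₁(B₂, ·) = 0`. Consequently `(S_w f)(x)` is a two-point average of `g(s) = f(x eˢ)` at
nodes `s₁ ≤ 0 ≤ s₂` of size at most `1/w` with barycenter `0`: the linear part of `g` at `0`
cancels, and the remainder is `o(1/w)` as soon as `g` is differentiable at `0`.
-/

open Real Filter Asymptotics

/-- The second-order Mellin spline `B₂(x) = (1 - |log x|)₊`. -/
noncomputable def B2 (x : ℝ) : ℝ := max (1 - |Real.log x|) 0

theorem tsum_mul_max_one_sub_abs_sub (g : ℤ → ℝ) (t : ℝ) :
    ∑' k : ℤ, g k * max (1 - |t - k|) 0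
      = g ⌊t⌋ * (1 - Int.fract t) + g (⌊t⌋ + 1) * Int.fract t := by
  have h₀ := Int.fract_nonneg t
  have h₁ := Int.fract_lt_one t
  have hfloor : t = ⌊t⌋ + Int.fract t := (Int.floor_add_fract t).symm
  rw [tsum_eq_sum (s := {⌊t⌋, ⌊t⌋ + 1}), Finset.sum_pair (by omega)]
  · push_cast
    rw [abs_of_nonneg (by linarith), abs_of_nonpos (by linarith),
      max_eq_left (by linarith), max_eq_left (by linarith)]
    unfold Int.fract
    ring
  · intro k hk
    simp only [Finset.mem_insert, Finset.mem_singleton, not_or] at hk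
    have hfar : 1 ≤ |t - k| := by
      rcases (by omega : k + 1 ≤ ⌊t⌋ ∨ ⌊t⌋ + 2 ≤ k) with h | h
      · have : (k : ℝ) + 1 ≤ ⌊t⌋ := by exact_mod_cast h
        rw [abs_of_nonneg (by linarith)]; linarith
      · have : (⌊t⌋ : ℝ) + 2 ≤ k := by exact_mod_cast h
        rw [abs_of_nonpos (by linarith)]; linarith
    rw [max_eq_right (by linarith), mul_zero]

theorem B2_exp_neg_mul {y : ℝ} (hy : 0 < y) (k : ℤ) :
    B2 (exp (-k) * y) = max (1 - |log y - k|) 0 := by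
  rw [B2, log_mul (exp_ne_zero _) hy.ne', log_exp, neg_add_eq_sub]

theorem tsum_mul_B2_exp_neg_mul (g : ℤ → ℝ) {y : ℝ} (hy : 0 < y) :
    ∑' k : ℤ, g k * B2 (exp (-k) * y)
      = g ⌊log y⌋ * (1 - Int.fract (log y)) + g (⌊log y⌋ + 1) * Int.fract (log y) := by
  simp only [B2_exp_neg_mul hy, tsum_mul_max_one_sub_abs_sub]

theorem tsum_B2_mul_sub_log_eq_zero {y : ℝ} (hy : 0 < y) :
    ∑' k : ℤ, B2 (exp (-k) * y) * ((k : ℝ) - log y) = 0 := by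
  simp_rw [mul_comm (B2 _)]
  rw [tsum_mul_B2_exp_neg_mul (fun k : ℤ => (k : ℝ) - log y) hy]
  push_cast
  unfold Int.fract
  ring

theorem expSampling_B2_eq (f : ℝ → ℝ) {w x : ℝ} (hw : w ≠ 0) (hx : 0 < x) :
    expSampling B2 f w x
      = (1 - Int.fract (w * log x)) * f (x * exp (-Int.fract (w * log x) / w))
        + Int.fract (w * log x) * f (x * exp ((1 - Int.fract (w * log x)) / w)) := by
  have hnode (n : ℝ) : exp (n / w) = x * exp ((n - w * log x) / w) := by
    rw [← exp_log hx, ← exp_add, exp_log hx]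
    field_simp
    ring_nf
  rw [expSampling, tsum_mul_B2_exp_neg_mul _ (rpow_pos_of_pos hx w), log_rpow hx]
  push_cast
  rw [hnode ⌊w * log x⌋, hnode (⌊w * log x⌋ + 1), ← Int.self_sub_floor]
  ring_nf

theorem HasDerivAt.two_point_sub_isLittleO {α : Type*} {l : Filter α} {g : ℝ → ℝ} {g' : ℝ}
    (hg : HasDerivAt g g' 0) {p q s₁ s₂ r : α → ℝ} (hp : p =O[l] (1 : α → ℝ))
    (hq : q =O[l] (1 : α → ℝ)) (hsum : ∀ a, p a + q a = 1)
    (hbary : ∀ a, p a * s₁ a + q a * s₂ a = 0) (h₁ : s₁ =O[l] r) (h₂ : s₂ =O[l] r)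
    (hr : Tendsto r l (nhds 0)) :
    (fun a => p a * g (s₁ a) + q a * g (s₂ a) - g 0) =o[l] r := by
  set R : ℝ → ℝ := fun s => g s - g 0 - g' * s
  have hR : R =o[nhds 0] fun s => s := by
    simpa [R, mul_comm g'] using hg.isLittleO
  have hR₁ : (fun a => p a * R (s₁ a)) =o[l] r := by
    simpa using hp.mul_isLittleO ((hR.comp_tendsto (h₁.trans_tendsto hr)).trans_isBigO h₁)
  have hR₂ : (fun a => q a * R (s₂ a)) =o[l] r := by
    simpa using hq.mul_isLittleO ((hR.comp_tendsto (h₂.trans_tendsto hr)).trans_isBigO h₂)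
  refine (hR₁.add hR₂).congr (fun a => ?_) fun _ => rfl
  linear_combination (-g 0) * hsum a - g' * hbary a

theorem B2_first_moment_vanishes_and_voronovskaja_general
    (f : ℝ → ℝ)
    (x : ℝ) (hx : 0 < x) (hfx : DifferentiableAt ℝ f x) :
    (∀ y : ℝ, 0 < y → ∑' k : ℤ, B2 (Real.exp (-k) * y) * ((k : ℝ) - Real.log y) = 0) ∧
    (fun w : ℝ => expSampling B2 f w x - f x) =o[atTop] fun w : ℝ => w⁻¹ := by
  refine ⟨fun y hy => tsum_B2_mul_sub_log_eq_zero hy, ?_⟩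
  set u : ℝ → ℝ := fun w => Int.fract (w * log x)
  have hg : HasDerivAt (fun s => f (x * exp s)) (deriv f x * (x * exp 0)) 0 := by
    refine HasDerivAt.comp (0 : ℝ) ?_ ((hasDerivAt_exp 0).const_mul x)
    simpa using hfx.hasDerivAt
  have hu : u =O[atTop] (1 : ℝ → ℝ) :=
    .of_bound 1 (.of_forall fun w => by simp [u, abs_of_nonneg, (Int.fract_lt_one _).le])
  have h1u : (fun w => 1 - u w) =O[atTop] (1 : ℝ → ℝ) := (isBigO_const_one ℝ (1 : ℝ) atTop).sub hu
  have hnode {v : ℝ → ℝ} (hv : v =O[atTop] (1 : ℝ → ℝ)) :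
      (fun w => v w / w) =O[atTop] fun w => w⁻¹ := by
    simpa [div_eq_mul_inv] using hv.mul (isBigO_refl (fun w : ℝ => w⁻¹) atTop)
  have hlim := hg.two_point_sub_isLittleO h1u hu (fun _ => sub_add_cancel _ _)
    (fun w => by ring) (hnode hu.neg_left) (hnode h1u) tendsto_inv_atTop_zero
  refine hlim.congr' ?_ .rfl
  filter_upwards [eventually_gt_atTop 0] with w hw
  simp [expSampling_B2_eq f hw.ne' hx, u]

/-- The first algebraic moment of `B₂` vanishes, and hence the generalized
exponential sampling series with kernel `B₂` approximates locally `C¹` functions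
with order `o(w⁻¹)`. -/
theorem B2_first_moment_vanishes_and_voronovskaja
    (f : ℝ → ℝ)
    (hfbd : ∃ B : ℝ, ∀ x : ℝ, 0 < x → |f x| ≤ B)
    (hfcont : ContinuousOn f (Set.Ioi (0:ℝ)))
    (x : ℝ) (hx : 0 < x) (hfx : DifferentiableAt ℝ f x) :
    (∀ y : ℝ, 0 < y → ∑' k : ℤ, B2 (Real.exp (-k) * y) * ((k : ℝ) - Real.log y) = 0) ∧
    (fun w : ℝ => expSampling B2 f w x - f x) =o[atTop] fun w : ℝ => w⁻¹ :=
  B2_first_moment_vanishes_and_voronovskaja_general f x hx hfx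
end

section
/- The Mellin–Fejér kernel F^c_ρ(x) := (x^{-c}/(2π)) ρ sinc²((ρ/π) log √x) (with F^c_ρ(1) = ρ/(2π)) belongs to X_c, and its Mellin transform on the line s = c + iv is the triangular function: [F^c_ρ]^∧_M(c + iv) = 1 − |v|/ρ for |v| ≤ ρ and 0 for |v| > ρ. -/
/-!
Under `u = e^{-t}` the Mellin transform on the line `Re s = c` becomes the Fourier transform
of `t ↦ e^{ct} F^c_ρ(e^{-t})`, which is the Fejér kernel `a sinc²(a t)` with `a = ρ / (2π)`;
this kernel is integrable, which also gives `F^c_ρ ∈ X_c`. A direct computation shows that the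
Fejér kernel is the Fourier transform of the triangle `(1 - |w| / a)₊`, so by Fourier inversion
(the triangle is continuous, integrable and even) the Fourier transform of the kernel is the
triangle, and at `w = v / (2π)` this is `(1 - |v| / ρ)₊`.
-/

open Real

/-- `sinc u = sin(πu)/(πu)`, `sinc 0 = 1`. -/
noncomputable def sinc (u : ℝ) : ℝ :=
  if u = 0 then 1 else Real.sin (π * u) / (π * u)

/-- The Mellin–Fejér kernel `F^c_ρ(x) = (x^{-c}/(2π)) ρ sinc²((ρ/π) log √x)`. -/
noncomputable def mellinFejer (c ρ : ℝ) (x : ℝ) : ℝ :=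
  x ^ (-c) / (2 * π) * ρ * _root_.sinc (ρ / π * Real.log (Real.sqrt x)) ^ 2

open MeasureTheory Set
open scoped FourierTransform

lemma sinc_eq_sinc_pi_mul (u : ℝ) : _root_.sinc u = Real.sinc (π * u) := by
  by_cases hu : u = 0
  · simp [_root_.sinc, hu]
  · simp [_root_.sinc, Real.sinc_of_ne_zero, hu, Real.pi_ne_zero]

lemma sinc_sq_le_two_mul_inv_one_add_sq (y : ℝ) : Real.sinc y ^ 2 ≤ 2 * (1 + y ^ 2)⁻¹ := by
  rw [← div_eq_mul_inv, le_div_iff₀ (by positivity)]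
  have h_sinc : Real.sinc y ^ 2 ≤ 1 := by
    rw [sq_le_one_iff_abs_le_one]; exact Real.abs_sinc_le_one y
  have h_sin : (Real.sinc y * y) ^ 2 ≤ 1 := by
    rcases eq_or_ne y 0 with rfl | hy
    · simp
    · rw [Real.sinc_of_ne_zero hy, div_mul_cancel₀ _ hy]; exact sin_sq_le_one y
  nlinarith

lemma integrable_sinc_sq : Integrable fun y => Real.sinc y ^ 2 :=
  (integrable_inv_one_add_sq.const_mul 2).mono' (by fun_prop) <|
    .of_forall fun y => by
      rw [norm_of_nonneg (sq_nonneg _)]; exact sinc_sq_le_two_mul_inv_one_add_sq y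

/-- `Real.sinc` is the unnormalized sinc, so this is `a · sinc²(a t)` in the normalized sinc. -/
noncomputable def fejerKernel (a t : ℝ) : ℝ := a * Real.sinc (π * a * t) ^ 2

lemma fejerKernel_neg (a t : ℝ) : fejerKernel a (-t) = fejerKernel a t := by
  simp [fejerKernel]

lemma fejerKernel_nonneg {a : ℝ} (ha : 0 ≤ a) (t : ℝ) : 0 ≤ fejerKernel a t := by
  unfold fejerKernel; positivity

lemma integrable_fejerKernel (a : ℝ) : Integrable (fejerKernel a) := by
  rcases eq_or_ne a 0 with rfl | ha
  · exact (integrable_zero ℝ ℝ volume).congr (.of_forall fun t => by simp [fejerKernel])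
  · exact (integrable_sinc_sq.comp_mul_left' (mul_ne_zero pi_ne_zero ha)).const_mul a

noncomputable def triangleFun (a w : ℝ) : ℝ := max (1 - |w| / a) 0

lemma triangleFun_neg (a w : ℝ) : triangleFun a (-w) = triangleFun a w := by
  simp [triangleFun]

lemma continuous_triangleFun (a : ℝ) : Continuous (triangleFun a) := by
  unfold triangleFun; fun_prop

lemma triangleFun_of_abs_le {a w : ℝ} (ha : 0 < a) (hw : |w| ≤ a) :
    triangleFun a w = 1 - |w| / a :=
  max_eq_left <| sub_nonneg.mpr <| (div_le_one ha).mpr hw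

lemma triangleFun_of_le_abs {a w : ℝ} (ha : 0 < a) (hw : a ≤ |w|) : triangleFun a w = 0 :=
  max_eq_right <| sub_nonpos.mpr <| (one_le_div ha).mpr hw

lemma triangleFun_div_div (a w : ℝ) {k : ℝ} (hk : 0 < k) :
    triangleFun (a / k) (w / k) = triangleFun a w := by
  rw [triangleFun, triangleFun, abs_div, abs_of_pos hk, div_div_div_cancel_right₀ hk.ne']

lemma support_triangleFun_subset {a : ℝ} (ha : 0 < a) :
    Function.support (triangleFun a) ⊆ Icc (-a) a := fun _ hw =>
  abs_le.mp <| not_lt.mp fun hlt => hw <| triangleFun_of_le_abs ha hlt.le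

lemma integrable_triangleFun {a : ℝ} (ha : 0 < a) :
    Integrable fun w => (triangleFun a w : ℂ) :=
  (Complex.continuous_ofReal.comp (continuous_triangleFun a)).integrable_of_hasCompactSupport <|
    HasCompactSupport.intro isCompact_Icc fun _ hw => by
      rw [Function.comp_apply, Complex.ofReal_eq_zero,
        Function.notMem_support.mp fun h => hw (support_triangleFun_subset ha h)]

lemma integral_cos_mul_one_sub_div {a : ℝ} (ha : a ≠ 0) (x : ℝ) :
    ∫ w in 0..a, 2 * cos (2 * π * x * w) * (1 - w / a) = fejerKernel a x := by
  rcases eq_or_ne x 0 with rfl | hx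
  · have h_integrand (w : ℝ) : 2 * cos (2 * π * 0 * w) * (1 - w / a) = 2 - 2 / a * w := by
      simp only [mul_zero, zero_mul, cos_zero]; ring
    simp_rw [h_integrand]
    rw [intervalIntegral.integral_sub intervalIntegrable_const
        (intervalIntegral.intervalIntegrable_id.const_mul _),
      intervalIntegral.integral_const, intervalIntegral.integral_const_mul, integral_id]
    simp only [fejerKernel, mul_zero, Real.sinc_zero]
    field_simp
    ring
  · set b := 2 * π * x
    have hb : b ≠ 0 := mul_ne_zero (mul_ne_zero two_ne_zero pi_ne_zero) hx
    have h_deriv : ∀ w ∈ uIcc 0 a, HasDerivAt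
        (fun w => (1 - w / a) * (2 * sin (b * w) / b) - 2 / (a * b ^ 2) * cos (b * w))
        (2 * cos (b * w) * (1 - w / a)) w := by
      intro w _
      refine ((((hasDerivAt_id w).div_const a).const_sub 1).mul
        ((((hasDerivAt_id w).const_mul b).sin.const_mul 2).div_const b) |>.sub
        (((hasDerivAt_id w).const_mul b).cos.const_mul (2 / (a * b ^ 2)))).congr_deriv ?_
      simp only [id]
      field_simp
      ring
    have h_cos : cos (b * a) = 1 - 2 * sin (π * a * x) ^ 2 := by
      rw [show b * a = 2 * (π * a * x) by ring, cos_two_mul, cos_sq']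
      ring
    rw [intervalIntegral.integral_eq_sub_of_hasDerivAt h_deriv
        (Continuous.intervalIntegrable (by fun_prop) _ _),
      fejerKernel, Real.sinc_of_ne_zero (by positivity), h_cos]
    simp only [div_self ha, sub_self, zero_mul, mul_zero, sin_zero, cos_zero, zero_div]
    field_simp
    ring

lemma fourier_ofReal_eq_integral_cos {g : ℝ → ℝ} (hg : Continuous g)
    (hg_even : ∀ w, g (-w) = g w) {a : ℝ} (ha : 0 ≤ a)
    (hg_supp : Function.support g ⊆ Icc (-a) a) (x : ℝ) :
    𝓕 (fun w => (g w : ℂ)) x = ↑(∫ w in 0..a, 2 * cos (2 * π * x * w) * g w) := by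
  set f : ℝ → ℂ := fun w => Complex.exp (↑(-2 * π * w * x) * Complex.I) • (g w : ℂ)
  have hf : Continuous f := by fun_prop
  have hf_supp : ∀ w, w ∉ Icc (-a) a → f w = 0 := fun w hw => by
    simp [f, Function.notMem_support.mp fun h => hw (hg_supp h)]
  have h_sym (w : ℝ) : f (-w) + f w = ↑(2 * cos (2 * π * x * w) * g w) := by
    simp only [f, hg_even, smul_eq_mul, ← add_mul]
    rw [show -2 * π * -w * x = 2 * π * x * w by ring,
      show -2 * π * w * x = -(2 * π * x * w) by ring]
    simp only [Complex.exp_mul_I, Complex.ofReal_neg, Complex.cos_neg, Complex.sin_neg]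
    push_cast
    ring
  calc 𝓕 (fun w => (g w : ℂ)) x = ∫ w in (-a)..a, f w := by
        rw [Real.fourier_real_eq_integral_exp_smul, intervalIntegral.integral_of_le (by linarith),
          ← integral_Icc_eq_integral_Ioc, setIntegral_eq_integral_of_forall_compl_eq_zero hf_supp]
    _ = (∫ w in 0..a, f (-w)) + ∫ w in 0..a, f w := by
        rw [intervalIntegral.integral_comp_neg, neg_zero,
          intervalIntegral.integral_add_adjacent_intervals]
        all_goals exact hf.intervalIntegrable _ _
    _ = _ := by
        rw [← intervalIntegral.integral_add
          (by exact (hf.comp continuous_neg).intervalIntegrable _ _) (hf.intervalIntegrable _ _)]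
        simp_rw [h_sym]
        exact intervalIntegral.integral_ofReal

lemma fourier_triangleFun {a : ℝ} (ha : 0 < a) (x : ℝ) :
    𝓕 (fun w => (triangleFun a w : ℂ)) x = fejerKernel a x := by
  rw [fourier_ofReal_eq_integral_cos (continuous_triangleFun a) (triangleFun_neg a) ha.le
    (support_triangleFun_subset ha), ← integral_cos_mul_one_sub_div ha.ne']
  congr 1
  refine intervalIntegral.integral_congr fun w hw => ?_
  rw [uIcc_of_le ha.le] at hw
  rw [triangleFun_of_abs_le ha (abs_le.mpr ⟨by linarith [hw.1], hw.2⟩), abs_of_nonneg hw.1]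

lemma fourier_fejerKernel {a : ℝ} (ha : 0 < a) (w : ℝ) :
    𝓕 (fun t => (fejerKernel a t : ℂ)) w = triangleFun a w := by
  have h_fourier : 𝓕 (fun w => (triangleFun a w : ℂ)) = fun t => (fejerKernel a t : ℂ) :=
    funext (fourier_triangleFun ha)
  have h_inv := (integrable_triangleFun ha).fourierInv_fourier_eq
    (h_fourier ▸ (integrable_fejerKernel a).ofReal)
    (Complex.continuous_ofReal.comp (continuous_triangleFun a)).continuousAt (v := -w)
  rwa [h_fourier, Real.fourierInv_eq_fourier_neg, neg_neg, triangleFun_neg] at h_inv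

lemma integrableOn_Ioi_zero_iff_integrable_comp_exp {E : Type*} [NormedAddCommGroup E]
    [NormedSpace ℝ E] (g : ℝ → E) :
    IntegrableOn g (Ioi 0) ↔ Integrable fun t => exp t • g (exp t) := by
  rw [← range_exp, ← image_univ, integrableOn_image_iff_integrableOn_abs_deriv_smul
    MeasurableSet.univ (fun t _ => (hasDerivAt_exp t).hasDerivWithinAt) exp_injective.injOn,
    integrableOn_univ]
  simp only [abs_of_pos (exp_pos _)]

lemma mellinFejer_exp (c ρ t : ℝ) :
    mellinFejer c ρ (exp t) = exp (-c * t) * fejerKernel (ρ / (2 * π)) t := by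
  rw [mellinFejer, fejerKernel, rpow_def_of_pos (exp_pos t), log_sqrt (exp_pos t).le, log_exp,
    sinc_eq_sinc_pi_mul, show π * (ρ / π * (t / 2)) = π * (ρ / (2 * π)) * t by field_simp]
  ring_nf

lemma exp_mul_abs_mellinFejer_exp_mul_rpow (c : ℝ) {ρ : ℝ} (hρ : 0 ≤ ρ) (t : ℝ) :
    exp t * (|mellinFejer c ρ (exp t)| * exp t ^ (c - 1)) = fejerKernel (ρ / (2 * π)) t := by
  have h_exp : exp t * exp (-c * t) * exp (t * (c - 1)) = 1 := by
    rw [← exp_add, ← exp_add, exp_eq_one_iff]; ring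
  rw [mellinFejer_exp, rpow_def_of_pos (exp_pos t), log_exp,
    abs_of_nonneg (mul_nonneg (exp_pos _).le (fejerKernel_nonneg (by positivity) t))]
  linear_combination fejerKernel _ t * h_exp

lemma exp_mul_mellinFejer_exp_neg (c ρ u : ℝ) :
    exp (-c * u) * mellinFejer c ρ (exp (-u)) = fejerKernel (ρ / (2 * π)) u := by
  rw [mellinFejer_exp, fejerKernel_neg, ← mul_assoc, ← exp_add,
    show -c * u + -c * -u = 0 by ring, exp_zero, one_mul]

/-- The Mellin–Fejér kernel belongs to `X_c` and its Mellin transform on the line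
`s = c + iv` is the triangular function `(1 - |v|/ρ)₊`. -/
theorem mellinFejer_transform (c ρ : ℝ) (hρ : 0 < ρ) :
    MeasureTheory.IntegrableOn
      (fun u : ℝ => |mellinFejer c ρ u| * u ^ (c - 1)) (Set.Ioi (0:ℝ)) ∧
    ∀ v : ℝ, ∫ u in Set.Ioi (0:ℝ),
        (u : ℂ) ^ ((c : ℂ) + Complex.I * v - 1) * (mellinFejer c ρ u : ℂ) =
      if |v| ≤ ρ then ((1 - |v| / ρ : ℝ) : ℂ) else 0 := by
  refine ⟨?_, fun v => ?_⟩
  · rw [integrableOn_Ioi_zero_iff_integrable_comp_exp]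
    exact (integrable_fejerKernel _).congr
      (.of_forall fun t => (exp_mul_abs_mellinFejer_exp_mul_rpow c hρ.le t).symm)
  · have h_kernel : (fun u : ℝ => exp (-c * u) • (mellinFejer c ρ (exp (-u)) : ℂ)) =
        fun u => (fejerKernel (ρ / (2 * π)) u : ℂ) := funext fun u => by
      rw [Complex.real_smul, ← Complex.ofReal_mul, exp_mul_mellinFejer_exp_neg]
    have hs_re : ((c : ℂ) + Complex.I * v).re = c := by simp
    have hs_im : ((c : ℂ) + Complex.I * v).im = v := by simp
    change mellin (fun u => (mellinFejer c ρ u : ℂ)) (c + Complex.I * v) = _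
    rw [mellin_eq_fourier, hs_re, hs_im, h_kernel, fourier_fejerKernel (by positivity),
      triangleFun_div_div _ _ two_pi_pos]
    split_ifs with hv
    · rw [triangleFun_of_abs_le hρ hv]
    · rw [triangleFun_of_le_abs hρ (not_le.mp hv).le, Complex.ofReal_zero]
end

section
/- For the exponential sampling series of F⁰_π, F⁰_π(x) = (2/π²) ∑_{k∈ℤ} (sin²(kπ/2)/k²) sinc(log x − k) (k = 0 term interpreted as (π²/4) sinc(log x)), the truncation error satisfies, for N ≥ 2 max{1, |log x|}: |(T_{π,N} F⁰_π)(x)| := |(2/π²) ∑_{|k| ≥ N+1} (sin²(kπ/2)/k²) sinc(log x − k)| ≤ (4/π³) N^{-1}. -/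
/-!
On the tail `|k| ≥ N + 1 > 2 |log x|` we have `|log x - k| ≥ |k| / 2`, so the `k`-th term is at
most `2 / (π |k|³) ≤ π⁻¹ (1 / (|k| - 1) - 1 / |k|)`. This majorant telescopes to `1 / N` on each
half-line, so the tail sum is at most `2 / (π N)`, and the prefactor `2 / π²` gives `4 / (π³ N)`.
-/

open Real

open Filter Topology

theorem hasSum_sub_succ_of_antitone {f : ℕ → ℝ} (hf : Antitone f)
    (hlim : Tendsto f atTop (𝓝 0)) : HasSum (fun n ↦ f n - f (n + 1)) (f 0) := by
  have hsum (m : ℕ) : ∑ i ∈ Finset.range m, (f i - f (i + 1)) = f 0 - f m :=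
    Finset.sum_range_sub' f m
  rw [hasSum_iff_tendsto_nat_of_nonneg (fun n ↦ sub_nonneg.mpr (hf n.le_succ))]
  simpa [hsum] using tendsto_const_nhds (x := f 0) |>.sub hlim

theorem hasSum_inv_sub_one_sub_inv_tail {N : ℕ} (hN : 0 < N) :
    HasSum (fun n : ℕ ↦ (((n + (N + 1) : ℕ) : ℝ) - 1)⁻¹ - ((n + (N + 1) : ℕ) : ℝ)⁻¹)
      (N : ℝ)⁻¹ := by
  have hanti : Antitone fun n : ℕ ↦ ((N : ℝ) + n)⁻¹ := fun m n hmn ↦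
    inv_anti₀ (by positivity) (by gcongr)
  have hlim : Tendsto (fun n : ℕ ↦ ((N : ℝ) + n)⁻¹) atTop (𝓝 0) :=
    tendsto_inv_atTop_zero.comp (tendsto_atTop_add_const_left _ _ tendsto_natCast_atTop_atTop)
  convert hasSum_sub_succ_of_antitone hanti hlim using 2 with n
  · push_cast; ring_nf
  · simp

theorem HasSum.subtype_natAbs_tail {M : Type*} [AddCommMonoid M] [TopologicalSpace M]
    [ContinuousAdd M] {c : ℕ → M} {a : M} {N : ℕ} (h : HasSum (fun n ↦ c (n + (N + 1))) a) :
    HasSum (fun k : {k : ℤ // (N : ℤ) + 1 ≤ |k|} ↦ c k.1.natAbs) (a + a) := by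
  set F := {k : ℤ | (N : ℤ) + 1 ≤ |k|}.indicator fun k ↦ c k.natAbs
  have hF (n : ℕ) : F (n + 1) = if N ≤ n then c (n + 1) else 0 := by
    rw [show ((n : ℤ) + 1) = ((n + 1 : ℕ) : ℤ) by push_cast; rfl]
    simp only [F, Set.indicator_apply, Set.mem_ofPred_eq, Int.abs_natCast, Int.natAbs_natCast]
    congr 1
    apply propext
    omega
  have hpos : HasSum (fun n : ℕ ↦ F (n + 1)) a := by
    rw [← (add_left_injective N).hasSum_iff]
    · convert h using 2 with n
      simp only [Function.comp_apply, hF, le_add_iff_nonneg_left, zero_le, if_true, add_assoc]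
    · rintro n hn
      rw [hF, if_neg]
      exact fun hn' ↦ hn ⟨n - N, by simp only; omega⟩
  have hneg : HasSum (fun n : ℕ ↦ F (-(n + 1))) a := by
    simpa only [F, Set.indicator_apply, Set.mem_ofPred_eq, abs_neg, Int.natAbs_neg] using hpos
  refine (hasSum_subtype_iff_indicator (f := fun k : ℤ ↦ c k.natAbs)).mpr ?_
  have hF0 : F 0 = 0 := Set.indicator_of_notMem (by simp) _
  have hsum := hpos.of_add_one_of_neg_add_one hneg
  rwa [hF0, add_zero] at hsum

theorem abs_sinc_le_inv {u : ℝ} (hu : u ≠ 0) : |_root_.sinc u| ≤ (π * |u|)⁻¹ := by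
  rw [_root_.sinc, if_neg hu, abs_div, abs_mul, abs_of_pos pi_pos, div_eq_mul_inv]
  exact mul_le_of_le_one_left (by positivity) (abs_sin_le_one _)

theorem abs_sin_sq_div_sq_mul_sinc_sub_le {u k : ℝ} (hk : 2 * |u| < |k|) :
    |sin (k * π / 2) ^ 2 / k ^ 2 * _root_.sinc (u - k)| ≤ 2 / (π * |k| ^ 3) := by
  have hk0 : 0 < |k| := by linarith [abs_nonneg u]
  have hdist : |k| / 2 ≤ |u - k| := by
    linarith [abs_sub_abs_le_abs_sub k u, abs_sub_comm u k]
  have hsinc : |_root_.sinc (u - k)| ≤ (π * (|k| / 2))⁻¹ :=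
    (abs_sinc_le_inv (abs_pos.mp (by linarith))).trans (by gcongr)
  have hcoeff : |sin (k * π / 2) ^ 2 / k ^ 2| ≤ (|k| ^ 2)⁻¹ := by
    rw [abs_div, abs_pow, abs_pow, div_eq_mul_inv]
    exact mul_le_of_le_one_left (by positivity) (pow_le_one₀ (abs_nonneg _) (abs_sin_le_one _))
  calc |sin (k * π / 2) ^ 2 / k ^ 2 * _root_.sinc (u - k)|
      ≤ (|k| ^ 2)⁻¹ * (π * (|k| / 2))⁻¹ := by
        rw [abs_mul]; exact mul_le_mul hcoeff hsinc (abs_nonneg _) (by positivity)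
    _ = 2 / (π * |k| ^ 3) := by field_simp

theorem two_div_cube_le_inv_sub_one_sub_inv {t : ℝ} (ht : 1 < t) :
    2 / t ^ 3 ≤ (t - 1)⁻¹ - t⁻¹ := by
  have ht1 : 0 < t - 1 := by linarith
  rw [inv_sub_inv ht1.ne' (by positivity), div_le_div_iff₀ (by positivity) (by positivity)]
  nlinarith [sq_nonneg (t - 1), mul_pos ht1 (by positivity : (0:ℝ) < t)]

theorem truncation_error_Fpi_general (x : ℝ) (N : ℕ)
    (hN : 2 * max 1 |Real.log x| ≤ (N : ℝ)) :
    |2 / π ^ 2 * ∑' k : {k : ℤ // (N : ℤ) + 1 ≤ |k|},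
        Real.sin ((k : ℤ) * π / 2) ^ 2 / ((k : ℤ) : ℝ) ^ 2 *
          _root_.sinc (Real.log x - ((k : ℤ) : ℝ))|
      ≤ 4 / π ^ 3 * ((N : ℝ))⁻¹ := by
  have hN1 : 1 ≤ (N : ℝ) := by linarith [le_max_left 1 |Real.log x|]
  have hlog : 2 * |Real.log x| ≤ N := by linarith [le_max_right 1 |Real.log x|]
  have hweights := (HasSum.subtype_natAbs_tail (c := fun n : ℕ ↦ ((n : ℝ) - 1)⁻¹ - (n : ℝ)⁻¹)
    (hasSum_inv_sub_one_sub_inv_tail (by exact_mod_cast hN1))).mul_left π⁻¹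
  have hterm (k : {k : ℤ // (N : ℤ) + 1 ≤ |k|}) :
      ‖Real.sin ((k : ℤ) * π / 2) ^ 2 / ((k : ℤ) : ℝ) ^ 2 *
          _root_.sinc (Real.log x - ((k : ℤ) : ℝ))‖ ≤
        π⁻¹ * (((k.1.natAbs : ℝ) - 1)⁻¹ - (k.1.natAbs : ℝ)⁻¹) := by
    have hk : (N : ℝ) + 1 ≤ |((k : ℤ) : ℝ)| := by exact_mod_cast k.2
    rw [Real.norm_eq_abs, Nat.cast_natAbs, Int.cast_abs]
    calc _ ≤ 2 / (π * |((k : ℤ) : ℝ)| ^ 3) := abs_sin_sq_div_sq_mul_sinc_sub_le (by linarith)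
      _ = π⁻¹ * (2 / |((k : ℤ) : ℝ)| ^ 3) := by ring
      _ ≤ _ := by gcongr; exact two_div_cube_le_inv_sub_one_sub_inv (by linarith)
  rw [abs_mul, abs_of_pos (by positivity : (0 : ℝ) < 2 / π ^ 2)]
  calc _ ≤ 2 / π ^ 2 * (π⁻¹ * ((N : ℝ)⁻¹ + (N : ℝ)⁻¹)) := by
        gcongr; exact tsum_of_norm_bounded hweights hterm
    _ = 4 / π ^ 3 * ((N : ℝ))⁻¹ := by ring

/-- Truncation-error estimate for the exponential sampling series of
`F⁰_π(x) = ½ sinc²(½ log x)`: for `N ≥ 2 max{1, |log x|}` the tail is at most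
`(4/π³) N⁻¹`. -/
theorem truncation_error_Fpi (x : ℝ) (hx : 0 < x) (N : ℕ)
    (hN : 2 * max 1 |Real.log x| ≤ (N : ℝ)) :
    |2 / π ^ 2 * ∑' k : {k : ℤ // (N : ℤ) + 1 ≤ |k|},
        Real.sin ((k : ℤ) * π / 2) ^ 2 / ((k : ℤ) : ℝ) ^ 2 *
          _root_.sinc (Real.log x - ((k : ℤ) : ℝ))|
      ≤ 4 / π ^ 3 * ((N : ℝ))⁻¹ :=
  truncation_error_Fpi_general x N hN
end

section
/- For the generalized exponential sampling series of F⁰_π(x) = ½ sinc²(½ log x) with the Mellin–Jackson kernel J_{1,2}(u) = C sinc⁴((log u)/(4π)), the truncation error (T_{w,N} f)(x) = (C/2) ∑_{|k| ≥ N+1} sinc²(k/(2w)) sinc⁴((w log x − k)/(4π)) satisfies, for N ≥ 2 max{1, |w log x|}: |(T_{w,N} f)(x)| ≤ R w² ∑_{k ≥ N+1} k^{-6} = O(N^{-5}) as N → ∞, with constant depending on w. -/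
open Real

lemma abs_sinc_div_le {u c : ℝ} (hu : u ≠ 0) (hc : 0 < c) :
    |_root_.sinc (u / c)| ≤ c / (π * |u|) := by
  have huc : u / c ≠ 0 := div_ne_zero hu hc.ne'
  rw [_root_.sinc, if_neg huc, abs_div, abs_mul, abs_of_pos pi_pos, abs_div, abs_of_pos hc]
  calc |Real.sin (π * (u / c))| / (π * (|u| / c)) ≤ 1 / (π * (|u| / c)) := by
        gcongr
        exact abs_sin_le_one _
    _ = c / (π * |u|) := by field_simp

lemma abs_sinc_sq_mul_sinc_pow_four_le {w L k : ℝ} (hw : 0 < w) (hk : k ≠ 0)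
    (hL : 2 * |L| ≤ |k|) :
    |_root_.sinc (k / (2 * w)) ^ 2 * _root_.sinc ((L - k) / (4 * π)) ^ 4|
      ≤ 16384 / π ^ 2 * w ^ 2 * (|k| ^ 6)⁻¹ := by
  have hk0 : 0 < |k| := abs_pos.mpr hk
  have hLk : |k| / 2 ≤ |L - k| := by
    have := abs_sub_abs_le_abs_sub k L
    rw [abs_sub_comm] at this
    linarith
  have hLk0 : L - k ≠ 0 := abs_pos.mp (by linarith)
  have h₁ : |_root_.sinc (k / (2 * w))| ≤ 2 * w / (π * |k|) :=
    abs_sinc_div_le hk (by positivity)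
  have h₂ : |_root_.sinc ((L - k) / (4 * π))| ≤ 8 / |k| :=
    calc |_root_.sinc ((L - k) / (4 * π))| ≤ 4 * π / (π * |L - k|) :=
          abs_sinc_div_le hLk0 (by positivity)
      _ = 4 / |L - k| := by field_simp
      _ ≤ 8 / |k| := by
          rw [div_le_div_iff₀ (by positivity) hk0]
          linarith
  rw [abs_mul, abs_pow, abs_pow]
  calc |_root_.sinc (k / (2 * w))| ^ 2 * |_root_.sinc ((L - k) / (4 * π))| ^ 4
      ≤ (2 * w / (π * |k|)) ^ 2 * (8 / |k|) ^ 4 := by gcongr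
    _ = 16384 / π ^ 2 * w ^ 2 * (|k| ^ 6)⁻¹ := by field_simp; ring

noncomputable def sumEquivAbsGe (N : ℕ) : ℕ ⊕ ℕ ≃ {k : ℤ // (N : ℤ) + 1 ≤ |k|} :=
  Equiv.ofBijective
    (Sum.elim (fun n ↦ ⟨N + 1 + n, by rw [abs_of_nonneg (by omega)]; omega⟩)
      (fun n ↦ ⟨-(N + 1 + n), by rw [abs_neg, abs_of_nonneg (by omega)]; omega⟩)) <| by
    constructor
    · rintro (m | m) (n | n) h <;> simp only [Sum.elim_inl, Sum.elim_inr, Subtype.mk.injEq] at h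
        <;> first | omega | simp; omega
    · rintro ⟨k, hk⟩
      rcases le_or_gt 0 k with h | h
      · rw [abs_of_nonneg h] at hk
        exact ⟨.inl (k - (N + 1)).toNat, by ext; simp; omega⟩
      · rw [abs_of_neg h] at hk
        exact ⟨.inr (-k - (N + 1)).toNat, by ext; simp; omega⟩

lemma norm_tsum_abs_ge_le {E : Type*} [SeminormedAddCommGroup E] {t : ℤ → E} {g : ℕ → ℝ}
    (N : ℕ) (hg : Summable g) (ht : ∀ k : ℤ, (N : ℤ) + 1 ≤ |k| → ‖t k‖ ≤ g k.natAbs) :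
    ‖∑' k : {k : ℤ // (N : ℤ) + 1 ≤ |k|}, t k‖ ≤ 2 * ∑' n : ℕ, g (N + 1 + n) := by
  have htail : HasSum (fun n ↦ g (N + 1 + n)) (∑' n : ℕ, g (N + 1 + n)) := by
    refine Summable.hasSum ?_
    simpa only [add_comm] using (summable_nat_add_iff (N + 1)).mpr hg
  have hpos (n : ℕ) : ((N : ℤ) + 1 + n).natAbs = N + 1 + n := by omega
  have hneg (n : ℕ) : (-((N : ℤ) + 1 + n)).natAbs = N + 1 + n := by omega
  have hsum : HasSum (fun k : {k : ℤ // (N : ℤ) + 1 ≤ |k|} ↦ g k.1.natAbs)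
      (2 * ∑' n : ℕ, g (N + 1 + n)) := by
    rw [← (sumEquivAbsGe N).hasSum_iff, two_mul]
    refine HasSum.sum ?_ ?_ <;> convert htail using 2 with n
    exacts [congrArg g (hpos n), congrArg g (hneg n)]
  exact tsum_of_norm_bounded hsum fun k ↦ ht k k.2

lemma pow_mul_add_le_pow_succ {a : ℝ} (ha : 0 ≤ a) (p : ℕ) :
    a ^ p * (a + 1 + p) ≤ (a + 1) ^ (p + 1) := by
  induction p with
  | zero => simp
  | succ p ih =>
    push_cast
    have : 0 ≤ a ^ p * (1 + p) := by positivity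
    calc a ^ (p + 1) * (a + 1 + (p + 1)) ≤ (a + 1) * (a ^ p * (a + 1 + p)) := by
          rw [pow_succ]; nlinarith
      _ ≤ (a + 1) * (a + 1) ^ (p + 1) := by gcongr
      _ = (a + 1) ^ (p + 1 + 1) := by ring

lemma inv_pow_succ_le_sub {a : ℝ} (ha : 0 < a) {p : ℕ} (hp : 0 < p) :
    ((a + 1) ^ (p + 1))⁻¹ ≤ (p * a ^ p)⁻¹ - (p * (a + 1) ^ p)⁻¹ := by
  have key := pow_mul_add_le_pow_succ ha.le p
  have hp' : (0 : ℝ) < p := by exact_mod_cast hp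
  rw [← sub_nonneg]
  have : (p * a ^ p)⁻¹ - (p * (a + 1) ^ p)⁻¹ - ((a + 1) ^ (p + 1))⁻¹
      = ((a + 1) ^ (p + 1) - a ^ p * (a + 1 + p)) / (p * a ^ p * (a + 1) ^ (p + 1)) := by
    field_simp
    ring
  rw [this]
  apply div_nonneg (by linarith) (by positivity)

lemma tsum_inv_pow_succ_le {a : ℝ} (ha : 0 < a) {p : ℕ} (hp : 0 < p) :
    ∑' n : ℕ, ((a + 1 + n) ^ (p + 1))⁻¹ ≤ (p * a ^ p)⁻¹ := by
  set d : ℕ → ℝ := fun n ↦ (p * (a + n) ^ p)⁻¹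
  refine Real.tsum_le_of_sum_range_le (fun n ↦ by positivity) fun m ↦ ?_
  calc ∑ n ∈ Finset.range m, ((a + 1 + n) ^ (p + 1))⁻¹
      ≤ ∑ n ∈ Finset.range m, (d n - d (n + 1)) := by
        gcongr with n
        simpa [d, add_right_comm, add_assoc] using
          inv_pow_succ_le_sub (by positivity : 0 < a + n) hp
    _ = d 0 - d m := Finset.sum_range_sub' d m
    _ ≤ (p * a ^ p)⁻¹ := by simp only [d]; simp; positivity

/-- The truncation error `T_{w,N}` without the factor `C/2`, with `L = w log x`. -/
noncomputable def jacksonTail (w L : ℝ) (N : ℕ) : ℝ :=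
  ∑' k : {k : ℤ // (N : ℤ) + 1 ≤ |k|},
    _root_.sinc ((k : ℝ) / (2 * w)) ^ 2 * _root_.sinc ((L - k) / (4 * π)) ^ 4

lemma abs_jacksonTail_le {w L : ℝ} (hw : 0 < w) {N : ℕ} (hL : 2 * |L| ≤ N) :
    |jacksonTail w L N|
      ≤ 2 * (16384 / π ^ 2 * w ^ 2 * ∑' n : ℕ, (((N : ℝ) + 1 + n) ^ 6)⁻¹) := by
  rw [← tsum_mul_left, ← Real.norm_eq_abs]
  refine (norm_tsum_abs_ge_le (t := fun k : ℤ ↦ _root_.sinc ((k : ℝ) / (2 * w)) ^ 2 *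
      _root_.sinc ((L - k) / (4 * π)) ^ 4) (g := fun n ↦ 16384 / π ^ 2 * w ^ 2 * ((n : ℝ) ^ 6)⁻¹)
    N ((Real.summable_nat_pow_inv.mpr (by norm_num)).mul_left _) fun k hk ↦ ?_).trans_eq
    (by push_cast; rfl)
  have hk' : (N : ℝ) + 1 ≤ |(k : ℝ)| := by exact_mod_cast hk
  simpa [Nat.cast_natAbs] using abs_sinc_sq_mul_sinc_pow_four_le hw (k := k)
    (abs_pos.mp (by linarith)) (by linarith)

lemma tsum_inv_pow_six_le {N : ℕ} (hN : 0 < N) :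
    ∑' n : ℕ, (((N : ℝ) + 1 + n) ^ 6)⁻¹ ≤ ((N : ℝ) ^ 5)⁻¹ :=
  calc ∑' n : ℕ, (((N : ℝ) + 1 + n) ^ 6)⁻¹ ≤ (5 * (N : ℝ) ^ 5)⁻¹ := by
        simpa using tsum_inv_pow_succ_le (by positivity : (0 : ℝ) < N) (p := 5) (by norm_num)
    _ ≤ ((N : ℝ) ^ 5)⁻¹ := by
        gcongr
        exact le_mul_of_one_le_left (by positivity) (by norm_num)

theorem truncation_error_Jackson_general (C : ℝ) :
    ∃ R > (0:ℝ), ∀ w > (0:ℝ), ∀ x > (0:ℝ), ∀ N : ℕ,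
      2 * max 1 |w * Real.log x| ≤ (N : ℝ) →
      |C / 2 * ∑' k : {k : ℤ // (N : ℤ) + 1 ≤ |k|},
          _root_.sinc (((k : ℤ) : ℝ) / (2 * w)) ^ 2 *
            _root_.sinc ((w * Real.log x - ((k : ℤ) : ℝ)) / (4 * π)) ^ 4|
        ≤ R * w ^ 2 * ∑' k : ℕ, (((N : ℝ) + 1 + (k : ℝ)) ^ 6)⁻¹ ∧
      |C / 2 * ∑' k : {k : ℤ // (N : ℤ) + 1 ≤ |k|},
          _root_.sinc (((k : ℤ) : ℝ) / (2 * w)) ^ 2 *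
            _root_.sinc ((w * Real.log x - ((k : ℤ) : ℝ)) / (4 * π)) ^ 4|
        ≤ R * w ^ 2 * (((N : ℝ)) ^ 5)⁻¹ := by
  set K : ℝ := 16384 / π ^ 2
  refine ⟨(|C| + 1) * K, by positivity, fun w hw x _ N hN ↦ ?_⟩
  change |C / 2 * jacksonTail w (w * Real.log x) N| ≤ _ ∧
    |C / 2 * jacksonTail w (w * Real.log x) N| ≤ _
  have hN₁ : 0 < N := by exact_mod_cast (lt_of_lt_of_le (by positivity) hN : (0 : ℝ) < N)
  have hTail := abs_jacksonTail_le hw (le_trans (by simp) hN : 2 * |w * Real.log x| ≤ N)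
  set T := ∑' n : ℕ, (((N : ℝ) + 1 + n) ^ 6)⁻¹
  have hbound : |C / 2 * jacksonTail w (w * Real.log x) N| ≤ (|C| + 1) * K * w ^ 2 * T := by
    rw [abs_mul, abs_div, abs_two]
    calc _ ≤ |C| / 2 * (2 * (K * w ^ 2 * T)) := by gcongr
      _ ≤ (|C| + 1) * K * w ^ 2 * T := by nlinarith [show 0 ≤ K * w ^ 2 * T by positivity]
  exact ⟨hbound, hbound.trans (by gcongr; exact tsum_inv_pow_six_le hN₁)⟩

/-- Truncation-error estimate for the generalized exponential sampling series of
`F⁰_π` with the Mellin–Jackson kernel `J_{1,2}(u) = C sinc⁴((log u)/(4π))`: for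
`N ≥ 2 max{1, |w log x|}` the tail is at most `R w² ∑_{k ≥ N+1} k⁻⁶ = O(N⁻⁵)`. -/
theorem truncation_error_Jackson (C : ℝ)
    (hC : C⁻¹ = ∫ u in Set.Ioi (0:ℝ), _root_.sinc (Real.log u / (4 * π)) ^ 4 / u) :
    ∃ R > (0:ℝ), ∀ w > (0:ℝ), ∀ x > (0:ℝ), ∀ N : ℕ,
      2 * max 1 |w * Real.log x| ≤ (N : ℝ) →
      |C / 2 * ∑' k : {k : ℤ // (N : ℤ) + 1 ≤ |k|},
          _root_.sinc (((k : ℤ) : ℝ) / (2 * w)) ^ 2 *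
            _root_.sinc ((w * Real.log x - ((k : ℤ) : ℝ)) / (4 * π)) ^ 4|
        ≤ R * w ^ 2 * ∑' k : ℕ, (((N : ℝ) + 1 + (k : ℝ)) ^ 6)⁻¹ ∧
      |C / 2 * ∑' k : {k : ℤ // (N : ℤ) + 1 ≤ |k|},
          _root_.sinc (((k : ℤ) : ℝ) / (2 * w)) ^ 2 *
            _root_.sinc ((w * Real.log x - ((k : ℤ) : ℝ)) / (4 * π)) ^ 4|
        ≤ R * w ^ 2 * (((N : ℝ)) ^ 5)⁻¹ :=
  truncation_error_Jackson_general C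
end
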